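/- arXiv:2405.18189 — 13 statements merged into one kernel-verified Lean document; each statement's English description precedes it below -/
import Mathlib

section
/- Let G be a simple graph on n vertices whose adjacency matrix A has exactly k distinct nonzero eigenvalues (i.e., the set of nonzero real numbers λ for which A − λI is singular has exactly k elements). If for each p ∈ {1, 2, ..., k} all diagonal entries of A^p are equal to one another, then G is walk-regular, i.e., for every positive integer i all diagonal entries of A^i are equal to one another. -/
open Polynomial Matrix

theorem myconj (n : ℕ) (U D V : Matrix (Fin n) (Fin n) ℝ) (h1 : U * V = 1) (h2 : V * U = 1)
    (p : ℝ[X]) : aeval (U * D * V) p = U * aeval D p * V := by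
  induction p using Polynomial.induction_on' with
  | add p q hp hq => simp [map_add, hp, hq, Matrix.mul_add, Matrix.add_mul]
  | monomial m a =>
    have hpow : ∀ m : ℕ, (U * D * V) ^ m = U * D ^ m * V := by
      intro m
      induction m with
      | zero => simpa using h1.symm
      | succ m ih =>
        rw [pow_succ, ih, pow_succ]
        calc U * D ^ m * V * (U * D * V) = U * D ^ m * (V * U) * D * V := by
              noncomm_ring
          _ = U * (D ^ m * D) * V := by rw [h2]; noncomm_ring
    rw [aeval_monomial, aeval_monomial, hpow]
    simp [Algebra.algebraMap_eq_smul_one, smul_mul_assoc, Matrix.mul_smul]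

theorem mydiag (n : ℕ) (f : Fin n → ℝ) (p : ℝ[X]) :
    aeval (Matrix.diagonal f) p = Matrix.diagonal (fun i => p.eval (f i)) := by
  have h := Polynomial.aeval_algHom_apply (Matrix.diagonalAlgHom (n := Fin n) ℝ) f p
  simp only [diagonalAlgHom_apply] at h
  have h3 : (aeval f) p = fun i => p.eval (f i) := by
    funext i
    have h2' : (aeval (f i)) p = (aeval f) p i :=
      Polynomial.aeval_algHom_apply (Pi.evalAlgHom ℝ (fun _ : Fin n => ℝ) i) f p
    rw [← h2', Polynomial.coe_aeval_eq_eval]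
  rw [h, h3]

theorem mydet (n : ℕ) (A : Matrix (Fin n) (Fin n) ℝ) (x : ℝ) :
    (A - x • 1).det = 0 ↔ x ∈ spectrum ℝ A := by
  rw [spectrum.mem_iff, Algebra.algebraMap_eq_smul_one, Matrix.isUnit_iff_isUnit_det,
    isUnit_iff_ne_zero, not_not, ← neg_sub A (x • 1), Matrix.det_neg]
  constructor
  · intro h; rw [h, mul_zero]
  · intro h
    rcases mul_eq_zero.mp h with h' | h'
    · exact absurd h' (pow_ne_zero _ (by norm_num))
    · exact h'

theorem myvanish (n : ℕ) (A : Matrix (Fin n) (Fin n) ℝ) (hA : A.IsHermitian) (q : ℝ[X])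
    (hvan : ∀ x ∈ spectrum ℝ A, q.eval x = 0) : aeval A q = 0 := by
  set U : Matrix (Fin n) (Fin n) ℝ := (hA.eigenvectorUnitary : Matrix (Fin n) (Fin n) ℝ) with hU
  have h2 : star U * U = 1 := Unitary.star_mul_self_of_mem (hA.eigenvectorUnitary).2
  have h1 : U * star U = 1 := Unitary.mul_star_self_of_mem (hA.eigenvectorUnitary).2
  have hst := hA.spectral_theorem
  have hof : (RCLike.ofReal ∘ hA.eigenvalues : Fin n → ℝ) = hA.eigenvalues := by
    funext i; simp
  rw [hof, Unitary.conjStarAlgAut_apply] at hst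
  rw [hst, myconj n U _ (star U) h1 h2, mydiag]
  have : (fun i => q.eval (hA.eigenvalues i)) = fun _ => (0 : ℝ) := by
    funext i
    exact hvan _ (hA.eigenvalues_mem_spectrum_real i)
  rw [this, Matrix.diagonal_zero, Matrix.mul_zero, Matrix.zero_mul]

/-- If the adjacency matrix `A` of a simple graph `G` on `n` vertices has
exactly `k` distinct nonzero eigenvalues, and for every `p ∈ {1,…,k}` the diagonal entries
of `A ^ p` are all equal, then `G` is walk-regular (for every positive integer `p` the
diagonal entries of `A ^ p` are all equal). -/
theorem stmt_1 (n k : ℕ) (G : SimpleGraph (Fin n)) [DecidableRel G.Adj]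
    (hk : {x : ℝ | x ≠ 0 ∧ (G.adjMatrix ℝ - x • 1).det = 0}.ncard = k)
    (hdiag : ∀ p : ℕ, 1 ≤ p → p ≤ k →
      ∀ i j : Fin n, ((G.adjMatrix ℝ) ^ p) i i = ((G.adjMatrix ℝ) ^ p) j j) :
    ∀ p : ℕ, 0 < p →
      ∀ i j : Fin n, ((G.adjMatrix ℝ) ^ p) i i = ((G.adjMatrix ℝ) ^ p) j j := by
  set A : Matrix (Fin n) (Fin n) ℝ := G.adjMatrix ℝ with hAdef
  have hA : A.IsHermitian := by
    have h := SimpleGraph.transpose_adjMatrix (α := ℝ) G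
    ext i j
    rw [Matrix.conjTranspose_apply, star_trivial]
    exact congrFun (congrFun h i) j
  set S : Set ℝ := {x : ℝ | x ≠ 0 ∧ (A - x • 1).det = 0} with hSdef
  have hSsub : S ⊆ spectrum ℝ A := fun x hx => (mydet n A x).mp hx.2
  have hfin : S.Finite := (A.finite_spectrum).subset hSsub
  set s : Finset ℝ := hfin.toFinset with hs
  have hcard : s.card = k := by
    rw [← hk, Set.ncard_eq_toFinset_card S hfin]
  -- the polynomial with the nonzero eigenvalues as roots
  set r : ℝ[X] := ∏ x ∈ s, (X - C x) with hrdef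
  have hrmonic : r.Monic := monic_prod_of_monic _ _ (fun x _ => monic_X_sub_C x)
  have hrdeg : r.natDegree = k := by
    rw [hrdef, natDegree_prod _ _ (fun x _ => X_sub_C_ne_zero x)]
    simp [natDegree_X_sub_C, hcard]
  -- A * r(A) = 0
  have hq : A * aeval A r = 0 := by
    have := myvanish n A hA (X * r) ?_
    · rwa [_root_.map_mul, aeval_X] at this
    · intro x hx
      rw [eval_mul, eval_X]
      by_cases hx0 : x = 0
      · rw [hx0, zero_mul]
      · have hxS : x ∈ S := ⟨hx0, (mydet n A x).mpr hx⟩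
        have hxs : x ∈ s := hfin.mem_toFinset.mpr hxS
        rw [hrdef, eval_prod, Finset.prod_eq_zero hxs (by simp), mul_zero]
  -- A ^ (k+1) is a combination of lower positive powers
  have hkey : A ^ (k + 1) = ∑ p ∈ Finset.range k, (-(r.coeff p)) • A ^ (p + 1) := by
    have h1 : aeval A r = ∑ p ∈ Finset.range (k + 1), r.coeff p • A ^ p :=
      aeval_eq_sum_range' (by omega : r.natDegree < k + 1) A
    rw [Finset.sum_range_succ] at h1
    have hck : r.coeff k = 1 := by
      have := hrmonic.coeff_natDegree
      rwa [hrdeg] at this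
    rw [hck, one_smul] at h1
    have h2 : A * (∑ p ∈ Finset.range k, r.coeff p • A ^ p) + A * A ^ k = 0 := by
      rw [← Matrix.mul_add, ← h1, hq]
    rw [Matrix.mul_sum] at h2
    have h3 : A * A ^ k = A ^ (k + 1) := (pow_succ' A k).symm
    rw [h3] at h2
    have h4 : ∀ p, A * (r.coeff p • A ^ p) = r.coeff p • A ^ (p + 1) := by
      intro p
      rw [Matrix.mul_smul, ← pow_succ' A p]
    simp_rw [h4] at h2
    have h6 : A ^ (k + 1) + ∑ p ∈ Finset.range k, r.coeff p • A ^ (p + 1) = 0 := by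
      rw [add_comm]; exact h2
    rw [eq_neg_of_add_eq_zero_left h6]
    rw [← Finset.sum_neg_distrib]
    exact Finset.sum_congr rfl fun p _ => (neg_smul _ _).symm
  -- strong induction
  have main : ∀ m : ℕ, ∀ i j : Fin n, (A ^ m) i i = (A ^ m) j j := by
    intro m
    induction m using Nat.strong_induction_on with
    | _ m ih =>
      intro i j
      rcases Nat.eq_zero_or_pos m with hm0 | hmpos
      · subst hm0; rw [pow_zero, Matrix.one_apply_eq, Matrix.one_apply_eq]
      by_cases hmk : m ≤ k
      · exact hdiag m hmpos hmk i j
      · have hm : m = (m - (k + 1)) + (k + 1) := by omega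
        set t := m - (k + 1) with ht
        rw [hm, pow_add, hkey, Matrix.mul_sum]
        have h5 : ∀ p, A ^ t * ((-(r.coeff p)) • A ^ (p + 1))
            = (-(r.coeff p)) • A ^ (t + (p + 1)) := by
          intro p
          rw [Matrix.mul_smul, ← pow_add]
        simp_rw [h5]
        rw [Matrix.sum_apply, Matrix.sum_apply]
        refine Finset.sum_congr rfl fun p hp => ?_
        have hplt : t + (p + 1) < m := by
          have := Finset.mem_range.mp hp
          omega
        rw [Matrix.smul_apply, Matrix.smul_apply, ih _ hplt i j]
  intro p _ i j
  exact main p i j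
end

section
/- Let G be a simple graph on n vertices whose adjacency matrix A has exactly k distinct nonzero eigenvalues (i.e., the set of nonzero real numbers λ for which A − λI is singular has exactly k elements). Then G is walk-regular if and only if for each p ∈ {1, 2, ..., k} all diagonal entries of A^p are equal to one another. -/
open Polynomial Matrix

/-- Polynomial evaluation of a diagonal matrix is the diagonal of evaluations. -/
lemma aeval_diagonal_aux (n : ℕ) (d : Fin n → ℝ) (p : ℝ[X]) :
    aeval (Matrix.diagonal d) p = Matrix.diagonal (fun i => p.eval (d i)) := by
  induction p using Polynomial.induction_on' with
  | add p q hp hq => simp [hp, hq, Matrix.diagonal_add]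
  | monomial m a =>
      simp [aeval_monomial, Matrix.diagonal_pow, Matrix.algebraMap_eq_diagonal,
        Matrix.diagonal_mul_diagonal]

/-- Conjugation commutes with polynomial evaluation. -/
lemma aeval_conj_aux (n : ℕ) (U M : Matrix (Fin n) (Fin n) ℝ)
    (h1 : star U * U = 1) (h2 : U * star U = 1) (p : ℝ[X]) :
    aeval (U * M * star U) p = U * aeval M p * star U := by
  induction p using Polynomial.induction_on' with
  | add p q hp hq => simp [hp, hq, Matrix.mul_add, Matrix.add_mul]
  | monomial m a =>
      have hpow : ∀ m : ℕ, (U * M * star U) ^ m = U * M ^ m * star U := by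
        intro m
        induction m with
        | zero => simp [h2]
        | succ m ih =>
            rw [pow_succ, ih, pow_succ]
            calc U * M ^ m * star U * (U * M * star U)
                = U * M ^ m * (star U * U) * M * star U := by noncomm_ring
              _ = U * (M ^ m * M) * star U := by rw [h1]; noncomm_ring
      simp [aeval_monomial, hpow, Algebra.algebraMap_eq_smul_one, smul_mul_assoc, mul_smul_comm]

lemma det_sub_smul_one_aux (n : ℕ) (A : Matrix (Fin n) (Fin n) ℝ) (hA : A.IsHermitian) (x : ℝ) :
    (A - x • 1).det = ∏ i, (hA.eigenvalues i - x) := by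
  set U : Matrix (Fin n) (Fin n) ℝ := (hA.eigenvectorUnitary : Matrix (Fin n) (Fin n) ℝ) with hU
  have h1 : star U * U = 1 := Matrix.mem_unitaryGroup_iff'.mp hA.eigenvectorUnitary.2
  have h2 : U * star U = 1 := Matrix.mem_unitaryGroup_iff.mp hA.eigenvectorUnitary.2
  have hsp : A = U * Matrix.diagonal hA.eigenvalues * star U := by
    simpa [RCLike.ofReal_real_eq_id] using hA.spectral_theorem
  have key : U * (Matrix.diagonal (fun i => hA.eigenvalues i - x)) * star U = A - x • 1 := by
    have hd : (Matrix.diagonal (fun i => hA.eigenvalues i - x))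
        = Matrix.diagonal hA.eigenvalues - x • 1 := by
      rw [Matrix.smul_one_eq_diagonal, Matrix.diagonal_sub]
    rw [hd, Matrix.mul_sub, Matrix.sub_mul, ← hsp, Matrix.mul_smul, Matrix.smul_mul,
      Matrix.mul_one, h2]
  rw [← key, Matrix.det_mul, Matrix.det_mul, mul_comm, ← mul_assoc, ← Matrix.det_mul, h1]
  simp [Matrix.det_diagonal]

/-- If the adjacency matrix `A` of a simple graph `G` on `n` vertices has
exactly `k` distinct nonzero eigenvalues, then `G` is walk-regular if and only if for every
`p ∈ {1,…,k}` the diagonal entries of `A ^ p` are all equal. -/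
theorem stmt_2 (n k : ℕ) (G : SimpleGraph (Fin n)) [DecidableRel G.Adj]
    (hk : {x : ℝ | x ≠ 0 ∧ (G.adjMatrix ℝ - x • 1).det = 0}.ncard = k) :
    (∀ p : ℕ, 0 < p →
      ∀ i j : Fin n, ((G.adjMatrix ℝ) ^ p) i i = ((G.adjMatrix ℝ) ^ p) j j) ↔
    (∀ p : ℕ, 1 ≤ p → p ≤ k →
      ∀ i j : Fin n, ((G.adjMatrix ℝ) ^ p) i i = ((G.adjMatrix ℝ) ^ p) j j) := by
  set A := G.adjMatrix ℝ with hAdef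
  constructor
  · intro h p hp1 _ i j; exact h p hp1 i j
  · intro h
    have hA : A.IsHermitian := by
      rw [Matrix.IsHermitian, Matrix.conjTranspose_eq_transpose_of_trivial]
      exact G.isSymm_adjMatrix
    have hdet : ∀ x : ℝ, (A - x • 1).det = ∏ i, (hA.eigenvalues i - x) :=
      det_sub_smul_one_aux n A hA
    set S : Finset ℝ := Finset.image hA.eigenvalues Finset.univ with hS
    have hsetE : {x : ℝ | x ≠ 0 ∧ (A - x • 1).det = 0} = ↑(S.erase 0) := by
      ext x
      simp only [Set.mem_setOf_eq, hdet, Finset.coe_erase, Set.mem_diff, Finset.mem_coe,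
        Finset.mem_erase, Set.mem_singleton_iff, hS, Finset.mem_image, Finset.mem_univ,
        true_and, Finset.prod_eq_zero_iff, sub_eq_zero]
      tauto
    have hkcard : (S.erase 0).card = k := by
      rw [← Set.ncard_coe_finset, ← hsetE]; exact hk
    have hm : S.card ≤ k + 1 := by
      have hsub : S ⊆ insert (0 : ℝ) (S.erase 0) := by
        intro x hx
        by_cases h0 : x = 0
        · simp [h0]
        · exact Finset.mem_insert_of_mem (Finset.mem_erase.mpr ⟨h0, hx⟩)
      calc S.card ≤ (insert (0 : ℝ) (S.erase 0)).card := Finset.card_le_card hsub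
        _ ≤ (S.erase 0).card + 1 := Finset.card_insert_le _ _
        _ = k + 1 := by rw [hkcard]
    set q : ℝ[X] := ∏ lam ∈ S, (X - C lam) with hq
    have hmonic : q.Monic := monic_prod_of_monic _ _ fun lam _ => monic_X_sub_C lam
    have hqdeg : q.natDegree = S.card := by
      rw [hq, Polynomial.natDegree_prod _ _ (fun lam _ => (monic_X_sub_C lam).ne_zero)]
      simp
    have hroot : aeval A q = 0 := by
      set U : Matrix (Fin n) (Fin n) ℝ := (hA.eigenvectorUnitary : Matrix (Fin n) (Fin n) ℝ)
      have h1 : star U * U = 1 := Matrix.mem_unitaryGroup_iff'.mp hA.eigenvectorUnitary.2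
      have h2 : U * star U = 1 := Matrix.mem_unitaryGroup_iff.mp hA.eigenvectorUnitary.2
      have hsp : A = U * Matrix.diagonal hA.eigenvalues * star U := by
        simpa [RCLike.ofReal_real_eq_id] using hA.spectral_theorem
      have heval : ∀ i, q.eval (hA.eigenvalues i) = 0 := by
        intro i
        rw [hq]
        rw [Polynomial.eval_prod]
        refine Finset.prod_eq_zero (Finset.mem_image_of_mem _ (Finset.mem_univ i)) ?_
        simp
      conv_lhs => rw [hsp]
      rw [aeval_conj_aux n U _ h1 h2, aeval_diagonal_aux]
      have : (fun i => q.eval (hA.eigenvalues i)) = fun _ => (0 : ℝ) := funext heval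
      rw [this]
      simp
    have main : ∀ p : ℕ, ∀ i j : Fin n, (A ^ p) i i = (A ^ p) j j := by
      intro p
      induction p using Nat.strong_induction_on with
      | _ p IH =>
        intro i j
        rcases Nat.lt_or_ge p (k + 1) with hlt | hge
        · rcases Nat.eq_zero_or_pos p with rfl | hp
          · simp [Matrix.one_apply]
          · exact h p hp (Nat.lt_succ_iff.mp hlt) i j
        · have hm1 : 1 ≤ S.card :=
            Finset.card_pos.mpr ⟨hA.eigenvalues i, Finset.mem_image_of_mem _ (Finset.mem_univ i)⟩
          have hmp : S.card ≤ p := le_trans hm hge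
          set r : ℝ[X] := X ^ S.card %ₘ q with hr
          have hrdeg : r.natDegree < S.card := by
            rcases eq_or_ne r 0 with h0 | h0
            · simpa [h0] using hm1
            · have hd := Polynomial.degree_modByMonic_lt (X ^ S.card) hmonic
              have h2' := Polynomial.natDegree_lt_natDegree h0 hd
              omega
          have hAm : A ^ S.card = aeval A r := by
            rw [hr, Polynomial.aeval_modByMonic_eq_self_of_root hroot]
            simp
          have expand : A ^ p = ∑ t ∈ Finset.range S.card, r.coeff t • A ^ (p - S.card + t) := by
            have hsplit : A ^ p = A ^ (p - S.card) * A ^ S.card := by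
              rw [← pow_add]; congr 1; omega
            rw [hsplit, hAm, Polynomial.aeval_eq_sum_range' hrdeg, Finset.mul_sum]
            refine Finset.sum_congr rfl fun t ht => ?_
            rw [Matrix.mul_smul, ← pow_add]
          rw [expand]
          simp only [Matrix.sum_apply, Matrix.smul_apply, smul_eq_mul]
          refine Finset.sum_congr rfl fun t ht => ?_
          have htm := Finset.mem_range.mp ht
          rw [IH (p - S.card + t) (by omega) i j]
    intro p hp i j
    exact main p i j
end

section
/- Let G be a walk-regular simple graph on n vertices with adjacency matrix A, and let P be an n×n real matrix satisfying the four Penrose equations APA = A, PAP = P, (AP)^T = AP, and (PA)^T = PA (i.e., P is the Moore-Penrose inverse of A). Then all diagonal entries of P are equal: P_{ii} = P_{jj} for all i, j. -/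
/-!
Since `A` is symmetric, its Moore–Penrose inverse is `f(A)` for `f x = x⁻¹` (with `0⁻¹ = 0`),
taken in the functional calculus. The spectrum of `A` is finite, so Lagrange interpolation turns
`f(A)` into a polynomial `q(A)`; the diagonal of `q(A)` is a combination of the diagonals of the
powers `A ^ k`, each of which is constant by walk-regularity.
-/

open Matrix Polynomial

structure IsMoorePenroseInverse {R : Type*} [Mul R] [Star R] (a p : R) : Prop where
  penrose₁ : a * p * a = a
  penrose₂ : p * a * p = p
  penrose₃ : IsSelfAdjoint (a * p)
  penrose₄ : IsSelfAdjoint (p * a)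

namespace IsMoorePenroseInverse

variable {R : Type*} [Semigroup R] [StarMul R] {a p q : R}

theorem mul_left_eq (hp : IsMoorePenroseInverse a p) (hq : IsMoorePenroseInverse a q) :
    a * p = a * q :=
  calc a * p = star (a * p) := hp.penrose₃.star_eq.symm
    _ = star (a * q * a * p) := by rw [hq.penrose₁]
    _ = star (a * p) * star (a * q) := by rw [← star_mul, mul_assoc (a * q)]
    _ = a * p * (a * q) := by rw [hp.penrose₃.star_eq, hq.penrose₃.star_eq]
    _ = a * q := by rw [← mul_assoc, hp.penrose₁]

theorem mul_right_eq (hp : IsMoorePenroseInverse a p) (hq : IsMoorePenroseInverse a q) :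
    p * a = q * a :=
  calc p * a = star (p * a) := hp.penrose₄.star_eq.symm
    _ = star (p * (a * q * a)) := by rw [hq.penrose₁]
    _ = star (q * a) * star (p * a) := by simp only [← star_mul, mul_assoc]
    _ = q * a * (p * a) := by rw [hp.penrose₄.star_eq, hq.penrose₄.star_eq]
    _ = q * a := by rw [mul_assoc, ← mul_assoc a, hp.penrose₁]

theorem unique (hp : IsMoorePenroseInverse a p) (hq : IsMoorePenroseInverse a q) : p = q :=
  calc p = p * a * p := hp.penrose₂.symm
    _ = q * (a * q) := by rw [hp.mul_right_eq hq, mul_assoc, hp.mul_left_eq hq]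
    _ = q := by rw [← mul_assoc, hq.penrose₂]

end IsMoorePenroseInverse

theorem IsSelfAdjoint.isMoorePenroseInverse_cfc_inv {A : Type*} [Ring A] [StarRing A]
    [Algebra ℝ A] [TopologicalSpace A] [ContinuousFunctionalCalculus ℝ A IsSelfAdjoint] {a : A}
    (ha : IsSelfAdjoint a)
    (hfin : (spectrum ℝ a).Finite) : IsMoorePenroseInverse a (cfc (·⁻¹ : ℝ → ℝ) a) := by
  have hinv : ContinuousOn (·⁻¹ : ℝ → ℝ) (spectrum ℝ a) := hfin.continuousOn _
  have hmul_left : a * cfc (·⁻¹ : ℝ → ℝ) a = cfc (fun x : ℝ ↦ x * x⁻¹) a := by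
    rw [cfc_mul .., cfc_id' ..]
  have hmul_right : cfc (·⁻¹ : ℝ → ℝ) a * a = cfc (fun x : ℝ ↦ x⁻¹ * x) a := by
    rw [cfc_mul .., cfc_id' ..]
  refine ⟨?_, ?_, hmul_left ▸ cfc_predicate _ a, hmul_right ▸ cfc_predicate _ a⟩
  · rw [hmul_left]
    nth_rw 2 [← cfc_id' ℝ a]
    rw [← cfc_mul ..]
    simp only [mul_inv_mul_cancel, cfc_id' ℝ a]
  · rw [hmul_right, ← cfc_mul ..]
    congr with x
    simpa using mul_inv_mul_cancel x⁻¹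

theorem exists_cfc_eq_aeval {R A : Type*} {p : A → Prop} [Field R] [StarRing R] [MetricSpace R]
    [IsTopologicalSemiring R] [ContinuousStar R] [Ring A] [StarRing A] [TopologicalSpace A]
    [Algebra R A] [ContinuousFunctionalCalculus R A p] {a : A} (ha : p a)
    (hfin : (spectrum R a).Finite) (f : R → R) : ∃ q : R[X], cfc f a = aeval a q := by
  classical
  refine ⟨Lagrange.interpolate hfin.toFinset id f, ?_⟩
  rw [← cfc_polynomial _ a ha]
  refine cfc_congr fun x hx ↦ ?_
  exact (Lagrange.eval_interpolate_at_node f (Set.injOn_id _) (hfin.mem_toFinset.mpr hx)).symm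

theorem Matrix.aeval_apply_self_eq_of_pow_apply_self_eq {n R : Type*} [Fintype n] [DecidableEq n]
    [CommSemiring R]
    {M : Matrix n n R} (hM : ∀ k : ℕ, 0 < k → ∀ i j : n, (M ^ k) i i = (M ^ k) j j)
    (q : R[X]) (i j : n) : aeval M q i i = aeval M q j j := by
  induction q using Polynomial.induction_on' with
  | add q r hq hr => simp only [map_add, add_apply, hq, hr]
  | monomial k c =>
    rw [aeval_monomial, ← Algebra.smul_def, smul_apply, smul_apply]
    rcases k.eq_zero_or_pos with rfl | hk
    · simp only [pow_zero, one_apply_eq]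
    · rw [hM k hk i j]

/-- If `G` is a walk-regular simple graph with adjacency matrix `A`, and `P`
satisfies the four Penrose equations for `A` (i.e., `P` is the Moore–Penrose inverse of `A`),
then all diagonal entries of `P` are equal. -/
theorem stmt_3 (n : ℕ) (G : SimpleGraph (Fin n)) [DecidableRel G.Adj]
    (hWR : ∀ p : ℕ, 0 < p →
      ∀ i j : Fin n, ((G.adjMatrix ℝ) ^ p) i i = ((G.adjMatrix ℝ) ^ p) j j)
    (P : Matrix (Fin n) (Fin n) ℝ)
    (h1 : G.adjMatrix ℝ * P * G.adjMatrix ℝ = G.adjMatrix ℝ)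
    (h2 : P * G.adjMatrix ℝ * P = P)
    (h3 : (G.adjMatrix ℝ * P)ᵀ = G.adjMatrix ℝ * P)
    (h4 : (P * G.adjMatrix ℝ)ᵀ = P * G.adjMatrix ℝ) :
    ∀ i j : Fin n, P i i = P j j := by
  set A := G.adjMatrix ℝ
  have hA : IsSelfAdjoint A := (isHermitian_iff_isSymm.mpr G.isSymm_adjMatrix).isSelfAdjoint
  have hP : IsMoorePenroseInverse A P :=
    ⟨h1, h2, (isHermitian_iff_isSymm.mpr h3).isSelfAdjoint,
      (isHermitian_iff_isSymm.mpr h4).isSelfAdjoint⟩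
  obtain ⟨q, hq⟩ := exists_cfc_eq_aeval hA A.finite_spectrum (·⁻¹)
  rw [hP.unique (hA.isMoorePenroseInverse_cfc_inv A.finite_spectrum), hq]
  exact aeval_apply_self_eq_of_pow_apply_self_eq hWR q
end

section
/- Let G be a walk-regular simple graph on n vertices with Laplacian matrix L, and let P be an n×n real matrix satisfying the four Penrose equations LPL = L, PLP = P, (LP)^T = LP, and (PL)^T = PL (i.e., P is the Moore-Penrose inverse of L). Then all diagonal entries of P are equal: P_{ii} = P_{jj} for all i, j. -/
open Matrix Polynomial

lemma myConjPow {n : ℕ} (U D V : Matrix (Fin n) (Fin n) ℝ) (hUV : U * V = 1) (hVU : V * U = 1) (p : ℕ) :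
    (U * D * V) ^ p = U * D ^ p * V := by
  induction p with
  | zero => simp [hUV]
  | succ k ih =>
      rw [pow_succ, ih, pow_succ]
      calc U * D ^ k * V * (U * D * V) = U * D ^ k * (V * U) * D * V := by
            simp only [mul_assoc]
        _ = U * (D ^ k * D) * V := by rw [hVU]; simp only [mul_one, mul_assoc]

lemma myAevalConj {n : ℕ} (U V : Matrix (Fin n) (Fin n) ℝ) (d : Fin n → ℝ)
    (hUV : U * V = 1) (hVU : V * U = 1) (r : Polynomial ℝ) :
    aeval (U * diagonal d * V) r = U * diagonal (fun k => r.eval (d k)) * V := by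
  induction r using Polynomial.induction_on' with
  | add p q hp hq =>
      rw [map_add, hp, hq]
      have : (diagonal fun k => (p+q).eval (d k)) = (diagonal fun k => p.eval (d k)) + (diagonal fun k => q.eval (d k)) := by
        simp [diagonal_add]
      rw [this, mul_add, add_mul]
  | monomial m a =>
      rw [aeval_monomial, myConjPow U _ V hUV hVU]
      have h2 : (diagonal fun k => ((monomial m) a).eval (d k)) = a • diagonal (fun k => (d k) ^ m) := by
        ext i j
        rcases eq_or_ne i j with h | h
        · subst h; simp [eval_monomial]
        · simp [diagonal_apply_ne _ h, Matrix.smul_apply]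
      rw [h2, Algebra.algebraMap_eq_smul_one, smul_mul_assoc, one_mul, mul_smul_comm, smul_mul_assoc]
      congr 2
      rw [diagonal_pow]
      rfl

lemma myConjMul {n : ℕ} (U V D1 D2 : Matrix (Fin n) (Fin n) ℝ) (hVU : V * U = 1) :
    (U * D1 * V) * (U * D2 * V) = U * (D1 * D2) * V := by
  calc (U * D1 * V) * (U * D2 * V) = U * D1 * (V * U) * D2 * V := by simp only [mul_assoc]
    _ = U * (D1 * D2) * V := by rw [hVU]; simp only [mul_one, mul_assoc]

lemma myDiagAeval {n : ℕ} (G : SimpleGraph (Fin n)) [DecidableRel G.Adj]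
    (hWR : ∀ p : ℕ, 0 < p →
      ∀ i j : Fin n, ((G.adjMatrix ℝ) ^ p) i i = ((G.adjMatrix ℝ) ^ p) j j)
    (r : Polynomial ℝ) (i j : Fin n) :
    (aeval (G.adjMatrix ℝ) r) i i = (aeval (G.adjMatrix ℝ) r) j j := by
  rw [aeval_eq_sum_range, Matrix.sum_apply, Matrix.sum_apply]
  refine Finset.sum_congr rfl fun k _ => ?_
  rcases Nat.eq_zero_or_pos k with hk | hk
  · subst hk; simp [Matrix.smul_apply]
  · simp only [Matrix.smul_apply]
    rw [hWR k hk i j]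

/-- If `G` is a walk-regular simple graph with Laplacian matrix `L`, and `P`
satisfies the four Penrose equations for `L` (i.e., `P` is the Moore–Penrose inverse of `L`),
then all diagonal entries of `P` are equal. -/
theorem stmt_4 (n : ℕ) (G : SimpleGraph (Fin n)) [DecidableRel G.Adj]
    (hWR : ∀ p : ℕ, 0 < p →
      ∀ i j : Fin n, ((G.adjMatrix ℝ) ^ p) i i = ((G.adjMatrix ℝ) ^ p) j j)
    (P : Matrix (Fin n) (Fin n) ℝ)
    (h1 : G.lapMatrix ℝ * P * G.lapMatrix ℝ = G.lapMatrix ℝ)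
    (h2 : P * G.lapMatrix ℝ * P = P)
    (h3 : (G.lapMatrix ℝ * P)ᵀ = G.lapMatrix ℝ * P)
    (h4 : (P * G.lapMatrix ℝ)ᵀ = P * G.lapMatrix ℝ) :
    ∀ i j : Fin n, P i i = P j j := by
  intro i j
  set L := G.lapMatrix ℝ with hLdef
  -- all degrees are equal
  have hdeg : ∀ v : Fin n, (G.degree v : ℝ) = (G.degree i : ℝ) := by
    intro v
    have h2' := hWR 2 (by norm_num) v i
    rwa [sq, G.adjMatrix_mul_self_apply_self, G.adjMatrix_mul_self_apply_self] at h2'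
  -- L is a polynomial of the adjacency matrix
  have hLA : L = aeval (G.adjMatrix ℝ) (C ((G.degree i : ℝ)) - X) := by
    rw [map_sub, aeval_X, aeval_C, hLdef, SimpleGraph.lapMatrix]
    congr 1
    rw [Matrix.algebraMap_eq_diagonal, SimpleGraph.degMatrix]
    ext u v
    rcases eq_or_ne u v with h | h
    · subst h; simp [hdeg u]
    · simp [diagonal_apply_ne _ h]
  -- diagonal entries of any polynomial in L are constant
  have hdiagL : ∀ r : Polynomial ℝ, ∀ u v : Fin n, (aeval L r) u u = (aeval L r) v v := by
    intro r u v
    have : aeval L r = aeval (G.adjMatrix ℝ) (r.comp (C ((G.degree i : ℝ)) - X)) := by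
      rw [aeval_comp, ← hLA]
    rw [this]
    exact myDiagAeval G hWR _ u v
  -- spectral decomposition
  have hH : L.IsHermitian := (G.posSemidef_lapMatrix ℝ).1
  set U : Matrix (Fin n) (Fin n) ℝ := (hH.eigenvectorUnitary : Matrix (Fin n) (Fin n) ℝ) with hUdef
  set μ : Fin n → ℝ := hH.eigenvalues with hμdef
  have hUV : U * star U = 1 := by
    rw [hUdef]; exact (Matrix.mem_unitaryGroup_iff).mp hH.eigenvectorUnitary.2
  have hVU : star U * U = 1 := by
    rw [hUdef]; exact (Matrix.mem_unitaryGroup_iff').mp hH.eigenvectorUnitary.2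
  have hspec : L = U * diagonal μ * star U := by
    have := hH.spectral_theorem
    simpa [RCLike.ofReal_real_eq_id] using this
  -- the interpolating polynomial
  set s : Finset ℝ := Finset.image μ Finset.univ with hsdef
  set q : Polynomial ℝ := Lagrange.interpolate s id (fun x => x⁻¹) with hqdef
  have hqeval : ∀ k : Fin n, q.eval (μ k) = (μ k)⁻¹ := by
    intro k
    have : μ k ∈ s := Finset.mem_image_of_mem μ (Finset.mem_univ k)
    have h := Lagrange.eval_interpolate_at_node (fun x => x⁻¹) (Set.injOn_id _) this
    simpa [hqdef] using h
  set N : Matrix (Fin n) (Fin n) ℝ := aeval L q with hNdef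
  have hNspec : N = U * diagonal (fun k => (μ k)⁻¹) * star U := by
    rw [hNdef, hspec, myAevalConj U (star U) μ hUV hVU]
    have : (fun k => q.eval (μ k)) = fun k => (μ k)⁻¹ := funext hqeval
    rw [this]
  -- Penrose equations for N
  have conj_symm : ∀ d : Fin n → ℝ, (U * diagonal d * star U)ᵀ = U * diagonal d * star U := by
    intro d
    rw [star_eq_conjTranspose, conjTranspose_eq_transpose_of_trivial, transpose_mul,
      transpose_mul, transpose_transpose, diagonal_transpose, mul_assoc]
  have dmul : ∀ d1 d2 : Fin n → ℝ, (diagonal d1) * (diagonal d2) = diagonal (fun k => d1 k * d2 k) := by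
    intro d1 d2; rw [diagonal_mul_diagonal]
  have n1 : L * N * L = L := by
    rw [hspec, hNspec, myConjMul _ _ _ _ hVU, myConjMul _ _ _ _ hVU, dmul, dmul]
    have : (fun k => μ k * (μ k)⁻¹ * μ k) = μ := by
      funext k
      rcases eq_or_ne (μ k) 0 with h | h
      · simp [h]
      · field_simp
    rw [this]
  have n2 : N * L * N = N := by
    rw [hspec, hNspec, myConjMul _ _ _ _ hVU, myConjMul _ _ _ _ hVU, dmul, dmul]
    have : (fun k => (μ k)⁻¹ * μ k * (μ k)⁻¹) = fun k => (μ k)⁻¹ := by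
      funext k
      rcases eq_or_ne (μ k) 0 with h | h
      · simp [h]
      · field_simp
    rw [this]
  have n3 : (L * N)ᵀ = L * N := by
    rw [hspec, hNspec, myConjMul _ _ _ _ hVU, dmul]
    exact conj_symm _
  have n4 : (N * L)ᵀ = N * L := by
    rw [hspec, hNspec, myConjMul _ _ _ _ hVU, dmul]
    exact conj_symm _
  -- uniqueness of the Moore–Penrose inverse: P = N
  have a1 : L * N = (L * P) * (L * N) := by
    calc L * N = (L * P * L) * N := by rw [h1]
      _ = (L * P) * (L * N) := by simp only [mul_assoc]
  have a2 : L * N = (L * N) * (L * P) := by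
    calc L * N = (L * N)ᵀ := n3.symm
      _ = ((L * P) * (L * N))ᵀ := by rw [← a1]
      _ = (L * N)ᵀ * (L * P)ᵀ := by rw [transpose_mul]
      _ = (L * N) * (L * P) := by rw [n3, h3]
  have a3 : L * P = (L * N) * (L * P) := by
    calc L * P = (L * N * L) * P := by rw [n1]
      _ = (L * N) * (L * P) := by simp only [mul_assoc]
  have hLP : L * P = L * N := a3.trans a2.symm
  have b1 : N * L = (N * L) * (P * L) := by
    calc N * L = N * (L * P * L) := by rw [h1]
      _ = (N * L) * (P * L) := by simp only [mul_assoc]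
  have b2 : N * L = (P * L) * (N * L) := by
    calc N * L = (N * L)ᵀ := n4.symm
      _ = ((N * L) * (P * L))ᵀ := by rw [← b1]
      _ = (P * L)ᵀ * (N * L)ᵀ := by rw [transpose_mul]
      _ = (P * L) * (N * L) := by rw [n4, h4]
  have b3 : P * L = (P * L) * (N * L) := by
    calc P * L = P * (L * N * L) := by rw [n1]
      _ = (P * L) * (N * L) := by simp only [mul_assoc]
  have hPL : P * L = N * L := b3.trans b2.symm
  have hPN : P = N := by
    calc P = P * L * P := h2.symm
      _ = N * L * P := by rw [hPL]
      _ = N * (L * P) := by rw [mul_assoc]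
      _ = N * (L * N) := by rw [hLP]
      _ = N * L * N := by rw [mul_assoc]
      _ = N := n2
  rw [hPN, hNdef]
  exact hdiagL q i j
end

section
/- Let G be a connected simple graph on n ≥ 2 vertices with Laplacian matrix L, and let f_1, ..., f_n be vectors spanning ℂ^{n−1} whose Gramian matrix equals L, i.e., ⟨f_j, f_i⟩ = L_{ij} for all i, j (so {f_i}_{i=1}^n is a frame generated by G). Then {f_i}_{i=1}^n is a full spark frame: every subset of {f_1, ..., f_n} with n−1 elements is linearly independent over ℂ. -/
open Finset Matrix

lemma lapMatrix_entry_cast {n : ℕ} (G : SimpleGraph (Fin n)) [DecidableRel G.Adj]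
    (i j : Fin n) : (G.lapMatrix ℂ) i j = ((G.lapMatrix ℝ) i j : ℂ) := by
  simp only [SimpleGraph.lapMatrix, SimpleGraph.degMatrix, Matrix.sub_apply,
    Matrix.diagonal_apply, SimpleGraph.adjMatrix_apply]
  split_ifs <;> push_cast <;> ring

lemma const_of_ker_lapMatrix {n : ℕ} (G : SimpleGraph (Fin n)) [DecidableRel G.Adj]
    (hconn : G.Connected) (x : Fin n → ℝ) (hx : G.lapMatrix ℝ *ᵥ x = 0) (i j : Fin n) :
    x i = x j := by
  have h := (SimpleGraph.lapMatrix_mulVec_eq_zero_iff_forall_reachable G (x := x)).mp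
    hx
  exact h i j (hconn.preconnected i j)

/-- If `G` is a connected simple graph on `n ≥ 2` vertices and
`{f i}_{i=1}^n` is a frame for `ℂ^{n-1}` generated by `G` (spanning vectors whose Gramian
matrix equals the Laplacian of `G`), then the frame is full spark: every subset with
`n - 1` elements is linearly independent. -/
theorem stmt_7 (n : ℕ) (hn : 2 ≤ n) (G : SimpleGraph (Fin n)) [DecidableRel G.Adj]
    (hconn : G.Connected)
    (f : Fin n → EuclideanSpace ℂ (Fin (n - 1)))
    (hspan : Submodule.span ℂ (Set.range f) = ⊤)
    (hGram : ∀ i j : Fin n, (inner ℂ (f i) (f j) : ℂ) = G.lapMatrix ℂ i j) :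
    ∀ s : Finset (Fin n), s.card = n - 1 →
      LinearIndependent ℂ (fun i : ↥s => f i.1) := by
  intro s hs
  rw [Fintype.linearIndependent_iff]
  intro g hg
  set c : Fin n → ℂ := fun i => if h : i ∈ s then g ⟨i, h⟩ else 0 with hc
  -- missing vertex
  obtain ⟨j0, hj0⟩ : ∃ j0, j0 ∉ s := by
    by_contra h
    push_neg at h
    have : s = Finset.univ := Finset.eq_univ_iff_forall.mpr h
    rw [this, Finset.card_univ, Fintype.card_fin] at hs
    omega
  -- the full sum vanishes
  have hsum : ∑ i : Fin n, c i • f i = 0 := by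
    have h1 : ∑ i : Fin n, c i • f i = ∑ i ∈ s, c i • f i :=
      (Finset.sum_subset (Finset.subset_univ s) (by intro i _ hi; simp [hc, hi])).symm
    rw [h1, ← Finset.sum_attach s (fun i => c i • f i), ← hg]
    apply Finset.sum_congr rfl
    intro i _
    simp [hc, i.2]
  -- L *ᵥ c = 0 over ℂ
  have hLc : ∀ j, (G.lapMatrix ℂ *ᵥ c) j = 0 := by
    intro j
    have h0 : (inner ℂ (f j) (∑ i : Fin n, c i • f i) : ℂ) = 0 := by
      rw [hsum, inner_zero_right]
    rw [inner_sum] at h0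
    simp_rw [inner_smul_right, hGram] at h0
    rw [Matrix.mulVec, dotProduct]
    rw [← h0]
    exact Finset.sum_congr rfl fun i _ => (mul_comm _ _)
  -- real and imaginary parts
  have hre : ∀ i, (c i).re = 0 := by
    have hker : G.lapMatrix ℝ *ᵥ (fun i => (c i).re) = 0 := by
      ext j
      simp only [Pi.zero_apply]
      have := hLc j
      rw [Matrix.mulVec, dotProduct] at this ⊢
      have := congrArg Complex.re this
      simp only [Complex.re_sum, Complex.zero_re] at this
      rw [← this]
      apply Finset.sum_congr rfl
      intro i _
      rw [lapMatrix_entry_cast, Complex.re_ofReal_mul]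
    intro i
    have := const_of_ker_lapMatrix G hconn _ hker i j0
    simpa [hc, hj0] using this
  have him : ∀ i, (c i).im = 0 := by
    have hker : G.lapMatrix ℝ *ᵥ (fun i => (c i).im) = 0 := by
      ext j
      simp only [Pi.zero_apply]
      have := hLc j
      rw [Matrix.mulVec, dotProduct] at this ⊢
      have := congrArg Complex.im this
      simp only [Complex.im_sum, Complex.zero_im] at this
      rw [← this]
      apply Finset.sum_congr rfl
      intro i _
      rw [lapMatrix_entry_cast, Complex.im_ofReal_mul]
    intro i
    have := const_of_ker_lapMatrix G hconn _ hker i j0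
    simpa [hc, hj0] using this
  intro i
  have : c i.1 = 0 := Complex.ext (hre i.1) (him i.1)
  simpa [hc, i.2] using this
end

section
/- Let G be a simple graph on n vertices with exactly k connected components, and let m be the minimum number of vertices in a connected component of G. Let f_1, ..., f_n be vectors spanning ℂ^{n−k} whose Gramian matrix equals the Laplacian L of G, i.e., ⟨f_j, f_i⟩ = L_{ij} for all i, j (so {f_i}_{i=1}^n is a frame generated by G). Then the spark of {f_i}_{i=1}^n equals m: every subset of {f_1, ..., f_n} with at most m−1 elements is linearly independent over ℂ, and there exists a linearly dependent subset with exactly m elements. -/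
open Finset SimpleGraph

lemma aux_key {n k' : ℕ} (G : SimpleGraph (Fin n)) [DecidableRel G.Adj]
    (f : Fin n → EuclideanSpace ℂ (Fin k'))
    (hGram : ∀ i j, (inner ℂ (f i) (f j) : ℂ) = G.lapMatrix ℂ i j)
    (c : Fin n → ℂ) :
    ∑ i, c i • f i = 0 ↔ ∀ i j, G.Adj i j → c i = c j := by
  have hswap : ∀ (g : Fin n → Fin n → ℂ),
      (∑ i, ∑ j, if G.Adj i j then g i j else 0)
        = ∑ i, ∑ j, if G.Adj i j then g j i else 0 := by
    intro g
    rw [Finset.sum_comm]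
    exact Finset.sum_congr rfl fun i _ => Finset.sum_congr rfl fun j _ =>
      if_congr (adj_comm G j i) rfl rfl
  have hQ : (inner ℂ (∑ i, c i • f i) (∑ i, c i • f i) : ℂ)
      = ∑ i, ∑ j, (starRingEnd ℂ) (c i) * c j * G.lapMatrix ℂ i j := by
    rw [sum_inner]
    refine Finset.sum_congr rfl fun i _ => ?_
    rw [inner_sum]
    refine Finset.sum_congr rfl fun j _ => ?_
    rw [inner_smul_left, inner_smul_right, hGram]
    ring
  have h1 : ∑ i, ∑ j, (starRingEnd ℂ) (c i) * c j * G.lapMatrix ℂ i j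
      = (∑ i, ∑ j, if G.Adj i j then (starRingEnd ℂ) (c i) * c i else 0)
        - ∑ i, ∑ j, if G.Adj i j then (starRingEnd ℂ) (c i) * c j else 0 := by
    rw [← Finset.sum_sub_distrib]
    refine Finset.sum_congr rfl fun i _ => ?_
    have hterm : ∀ j, (starRingEnd ℂ) (c i) * c j * G.lapMatrix ℂ i j
        = (if i = j then (starRingEnd ℂ) (c i) * c j * (G.degree i : ℂ) else 0)
          - (if G.Adj i j then (starRingEnd ℂ) (c i) * c j else 0) := by
      intro j
      simp only [SimpleGraph.lapMatrix, SimpleGraph.degMatrix, SimpleGraph.adjMatrix,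
        Matrix.sub_apply, Matrix.diagonal_apply, Matrix.of_apply]
      split_ifs <;> ring
    simp_rw [hterm]
    rw [Finset.sum_sub_distrib, Finset.sum_ite_eq, if_pos (Finset.mem_univ i)]
    congr 1
    have hdeg : ((G.degree i : ℂ)) = ∑ j, if G.Adj i j then (1:ℂ) else 0 :=
      G.degree_eq_sum_if_adj i
    rw [hdeg, Finset.mul_sum]
    exact Finset.sum_congr rfl fun j _ => by split_ifs <;> ring
  have h2 : (∑ i, ∑ j, if G.Adj i j then
        star (c i - c j) * (c i - c j) else 0)
      = ((∑ i, ∑ j, if G.Adj i j then (starRingEnd ℂ) (c i) * c i else 0)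
        + ∑ i, ∑ j, if G.Adj i j then (starRingEnd ℂ) (c j) * c j else 0)
        - ((∑ i, ∑ j, if G.Adj i j then (starRingEnd ℂ) (c i) * c j else 0)
        + ∑ i, ∑ j, if G.Adj i j then (starRingEnd ℂ) (c j) * c i else 0) := by
    rw [← Finset.sum_add_distrib, ← Finset.sum_add_distrib, ← Finset.sum_sub_distrib]
    refine Finset.sum_congr rfl fun i _ => ?_
    rw [← Finset.sum_add_distrib, ← Finset.sum_add_distrib, ← Finset.sum_sub_distrib]
    refine Finset.sum_congr rfl fun j _ => ?_
    split_ifs with h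
    · simp only [Complex.star_def]
      rw [map_sub]
      ring
    · ring
  have hmain : ∑ i, ∑ j, (starRingEnd ℂ) (c i) * c j * G.lapMatrix ℂ i j
      = (∑ i, ∑ j, if G.Adj i j then star (c i - c j) * (c i - c j) else 0) / 2 := by
    rw [h2, hswap (fun i j => (starRingEnd ℂ) (c j) * c j),
      hswap (fun i j => (starRingEnd ℂ) (c j) * c i), h1]
    ring
  have hnormSq : (∑ i, ∑ j, if G.Adj i j then star (c i - c j) * (c i - c j) else 0)
      = ((∑ i, ∑ j, if G.Adj i j then Complex.normSq (c i - c j) else 0 : ℝ) : ℂ) := by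
    push_cast
    refine Finset.sum_congr rfl fun i _ => Finset.sum_congr rfl fun j _ => ?_
    split_ifs with h
    · rw [Complex.star_def]; exact Complex.normSq_eq_conj_mul_self.symm
    · rfl
  constructor
  · intro hz
    have hQ0 : ((∑ i, ∑ j, if G.Adj i j then Complex.normSq (c i - c j) else 0 : ℝ) : ℂ) / 2 = 0 := by
      rw [← hnormSq, ← hmain, ← hQ, hz, inner_zero_right]
    have hR : (∑ i, ∑ j, if G.Adj i j then Complex.normSq (c i - c j) else 0 : ℝ) = 0 := by
      rw [div_eq_zero_iff] at hQ0
      rcases hQ0 with h | h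
      · exact_mod_cast h
      · norm_num at h
    intro i j hij
    have hnn : ∀ i ∈ Finset.univ (α := Fin n),
        (0:ℝ) ≤ ∑ j, if G.Adj i j then Complex.normSq (c i - c j) else 0 := by
      intro i _
      refine Finset.sum_nonneg fun j _ => ?_
      split_ifs
      · exact Complex.normSq_nonneg _
      · exact le_refl 0
    have hrow := (Finset.sum_eq_zero_iff_of_nonneg hnn).mp hR i (Finset.mem_univ i)
    have hnn2 : ∀ j ∈ Finset.univ (α := Fin n),
        (0:ℝ) ≤ if G.Adj i j then Complex.normSq (c i - c j) else 0 := by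
      intro j _
      split_ifs
      · exact Complex.normSq_nonneg _
      · exact le_refl 0
    have hentry := (Finset.sum_eq_zero_iff_of_nonneg hnn2).mp hrow j (Finset.mem_univ j)
    rw [if_pos hij] at hentry
    exact sub_eq_zero.mp (Complex.normSq_eq_zero.mp hentry)
  · intro h
    have : (inner ℂ (∑ i, c i • f i) (∑ i, c i • f i) : ℂ) = 0 := by
      rw [hQ, hmain]
      have : (∑ i, ∑ j, if G.Adj i j then star (c i - c j) * (c i - c j) else 0) = 0 := by
        refine Finset.sum_eq_zero fun i _ => Finset.sum_eq_zero fun j _ => ?_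
        split_ifs with hij
        · rw [h i j hij]; simp
        · rfl
      rw [this]; simp
    exact inner_self_eq_zero.mp this

lemma aux_reach {n : ℕ} (G : SimpleGraph (Fin n)) (c : Fin n → ℂ)
    (h : ∀ i j, G.Adj i j → c i = c j) :
    ∀ i j, G.Reachable i j → c i = c j := by
  intro i j ⟨w⟩
  induction w with
  | nil => rfl
  | cons hA _ h' => exact (h _ _ hA).trans h'

/-- Let `G` be a simple graph on `n` vertices with exactly `k` connected
components, and let `m` be the minimum number of vertices in a connected component of `G`.
If `{f i}_{i=1}^n` is a frame for `ℂ^{n-k}` generated by `G` (spanning vectors whose Gramian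
matrix equals the Laplacian of `G`), then the spark of the frame is `m`: every subset with
at most `m - 1` elements is linearly independent, and some subset with exactly `m` elements
is linearly dependent. -/
theorem stmt_8 (n k m : ℕ) (G : SimpleGraph (Fin n)) [DecidableRel G.Adj]
    (hk : Nat.card G.ConnectedComponent = k)
    (hm : IsLeast {s : ℕ | ∃ c : G.ConnectedComponent,
      Nat.card {v : Fin n // G.connectedComponentMk v = c} = s} m)
    (f : Fin n → EuclideanSpace ℂ (Fin (n - k)))
    (hspan : Submodule.span ℂ (Set.range f) = ⊤)
    (hGram : ∀ i j : Fin n, (inner ℂ (f i) (f j) : ℂ) = G.lapMatrix ℂ i j) :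
    (∀ s : Finset (Fin n), s.card ≤ m - 1 →
      LinearIndependent ℂ (fun i : ↥s => f i.1)) ∧
    (∃ s : Finset (Fin n), s.card = m ∧
      ¬ LinearIndependent ℂ (fun i : ↥s => f i.1)) := by
  classical
  have hm1 : 1 ≤ m := by
    obtain ⟨c0, hc0⟩ := hm.1
    obtain ⟨v, hv⟩ := c0.exists_rep
    have hne : Nonempty {u : Fin n // G.connectedComponentMk u = c0} := ⟨⟨v, hv⟩⟩
    have := Nat.card_pos (α := {u : Fin n // G.connectedComponentMk u = c0})
    omega
  constructor
  · intro s hs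
    rw [Fintype.linearIndependent_iff]
    intro g hg i₀
    by_contra hne
    set c : Fin n → ℂ := fun v => if h : v ∈ s then g ⟨v, h⟩ else 0 with hc
    have hcs : ∀ i : ↥s, c i.1 = g i := by
      intro i
      simp only [hc, dif_pos i.2]
    have hsum : ∑ v, c v • f v = 0 := by
      rw [← Finset.sum_subset s.subset_univ (fun v _ hv => by
        simp only [hc, dif_neg hv, zero_smul])]
      rw [← Finset.sum_coe_sort s (fun v => c v • f v), ← hg]
      exact Finset.sum_congr rfl fun i _ => by rw [hcs]
    have hadj := (aux_key G f hGram c).mp hsum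
    have hreach := aux_reach G c hadj
    set v := (i₀ : Fin n)
    have hcv : c v ≠ 0 := by rw [hcs i₀]; exact hne
    have hsub : ∀ u : Fin n,
        G.connectedComponentMk u = G.connectedComponentMk v → u ∈ s := by
      intro u hu
      have hr : G.Reachable u v := (SimpleGraph.ConnectedComponent.eq).mp hu
      have hcu : c u = c v := hreach _ _ hr
      by_contra hns
      rw [hc] at hcu
      simp only [dif_neg hns] at hcu
      exact hcv hcu.symm
    have hmle : m ≤ Nat.card
        {u : Fin n // G.connectedComponentMk u = G.connectedComponentMk v} :=
      hm.2 ⟨G.connectedComponentMk v, rfl⟩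
    have hinj : Function.Injective
        (fun u : {u : Fin n // G.connectedComponentMk u = G.connectedComponentMk v} =>
          (⟨u.1, hsub u.1 u.2⟩ : ↥s)) := by
      intro a b hab
      exact Subtype.ext (congrArg Subtype.val hab :)
    have hcard : Nat.card
        {u : Fin n // G.connectedComponentMk u = G.connectedComponentMk v} ≤ s.card := by
      rw [Nat.card_eq_fintype_card]
      calc Fintype.card {u : Fin n // G.connectedComponentMk u = G.connectedComponentMk v}
          ≤ Fintype.card ↥s := Fintype.card_le_of_injective _ hinj
        _ = s.card := Fintype.card_coe s
    omega
  · obtain ⟨c0, hc0⟩ := hm.1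
    set s : Finset (Fin n) :=
      Finset.univ.filter (fun v => G.connectedComponentMk v = c0) with hsdef
    have hscard : s.card = m := by
      rw [← hc0, Nat.card_eq_fintype_card, Fintype.card_subtype]
    refine ⟨s, hscard, ?_⟩
    intro hLI
    set c : Fin n → ℂ := fun v => if G.connectedComponentMk v = c0 then 1 else 0 with hc
    have hadj : ∀ i j, G.Adj i j → c i = c j := by
      intro i j hij
      have : G.connectedComponentMk i = G.connectedComponentMk j :=
        SimpleGraph.ConnectedComponent.sound hij.reachable
      simp only [hc, this]
    have hsum := (aux_key G f hGram c).mpr hadj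
    have hsum2 : ∑ i : ↥s, (1:ℂ) • f i.1 = 0 := by
      rw [← hsum, Finset.sum_coe_sort s (fun v => (1:ℂ) • f v)]
      rw [← Finset.sum_subset s.subset_univ (fun v _ hv => by
        have : ¬ G.connectedComponentMk v = c0 := by
          intro h; exact hv (Finset.mem_filter.mpr ⟨Finset.mem_univ v, h⟩)
        simp only [hc, if_neg this, zero_smul])]
      refine Finset.sum_congr rfl fun v hv => ?_
      have : G.connectedComponentMk v = c0 := (Finset.mem_filter.mp hv).2
      simp only [hc, if_pos this]
    have hsne : s.Nonempty := Finset.card_pos.mp (by omega)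
    obtain ⟨v, hv⟩ := hsne
    have := Fintype.linearIndependent_iff.mp hLI (fun _ => 1) hsum2 ⟨v, hv⟩
    exact one_ne_zero this
end

section
/- Let G be a simple graph on n vertices with exactly m connected components, and let f_1, ..., f_n be vectors spanning ℂ^{n−m} whose Gramian matrix equals the Laplacian L of G (so {f_i}_{i=1}^n is a frame generated by G), with frame operator S. Then a sequence h_1, ..., h_n in ℂ^{n−m} is a dual frame of {f_i}_{i=1}^n (i.e., Σ_{i=1}^n ⟨x, f_i⟩ h_i = x for all x ∈ ℂ^{n−m}) if and only if there exist vectors ν_C ∈ ℂ^{n−m}, one for each connected component C of G, such that h_i = S^{−1} f_i + ν_{C(i)} for every i, where C(i) denotes the connected component containing vertex i. -/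
open Finset Matrix SimpleGraph in
private lemma lapC_cast' {n : ℕ} (G : SimpleGraph (Fin n)) [DecidableRel G.Adj] (i j : Fin n) :
    G.lapMatrix ℂ i j = ((G.lapMatrix ℝ i j : ℝ) : ℂ) := by
  simp [SimpleGraph.lapMatrix, SimpleGraph.degMatrix, Matrix.sub_apply, Matrix.diagonal,
    SimpleGraph.adjMatrix]
  split_ifs <;> simp

open Finset Matrix SimpleGraph in
private lemma lap_ker_complex' {n : ℕ} (G : SimpleGraph (Fin n)) [DecidableRel G.Adj]
    (u : Fin n → ℂ) (hu : G.lapMatrix ℂ *ᵥ u = 0) :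
    ∀ i j, G.Reachable i j → u i = u j := by
  have key : ∀ v : Fin n → ℝ, (∀ i, v i = (u i).re) ∨ (∀ i, v i = (u i).im) →
      ∀ i j, G.Reachable i j → v i = v j := by
    intro v hv
    rw [← lapMatrix_mulVec_eq_zero_iff_forall_reachable]
    ext j
    have h0 := congrFun hu j
    simp only [mulVec, dotProduct, Pi.zero_apply] at h0
    simp only [Matrix.toLin'_apply, mulVec, dotProduct, Pi.zero_apply]
    rcases hv with hv | hv
    · have := congrArg Complex.re h0
      rw [Complex.re_sum] at this
      simpa [lapC_cast', hv] using this
    · have := congrArg Complex.im h0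
      rw [Complex.im_sum] at this
      simpa [lapC_cast', hv] using this
  intro i j hij
  exact Complex.ext (key (fun i => (u i).re) (Or.inl fun _ => rfl) i j hij)
    (key (fun i => (u i).im) (Or.inr fun _ => rfl) i j hij)


/-- Let `G` be a simple graph on `n` vertices with exactly `m` connected
components and `{f i}_{i=1}^n` a frame for `ℂ^{n-m}` generated by `G`, with frame operator
`S` (so `S x = Σᵢ ⟨x, fᵢ⟩ fᵢ`, which in Mathlib's convention is `Σᵢ ⟪fᵢ, x⟫ • fᵢ`).
Then `{h i}` is a dual frame of `{f i}` if and only if there are vectors `ν c`, one for each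
connected component `c` of `G`, with `h i = S⁻¹ (f i) + ν (component of i)` for all `i`. -/
theorem stmt_9 (n m : ℕ) (G : SimpleGraph (Fin n)) [DecidableRel G.Adj]
    (hm : Nat.card G.ConnectedComponent = m)
    (f : Fin n → EuclideanSpace ℂ (Fin (n - m)))
    (hspan : Submodule.span ℂ (Set.range f) = ⊤)
    (hGram : ∀ i j : Fin n, (inner ℂ (f i) (f j) : ℂ) = G.lapMatrix ℂ i j)
    (S : EuclideanSpace ℂ (Fin (n - m)) ≃ₗ[ℂ] EuclideanSpace ℂ (Fin (n - m)))
    (hS : ∀ x, S x = ∑ i, (inner ℂ (f i) x : ℂ) • f i)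
    (h : Fin n → EuclideanSpace ℂ (Fin (n - m))) :
    (∀ x, ∑ i, (inner ℂ (f i) x : ℂ) • h i = x) ↔
      ∃ ν : G.ConnectedComponent → EuclideanSpace ℂ (Fin (n - m)),
        ∀ i, h i = S.symm (f i) + ν (G.connectedComponentMk i) := by
  classical
  have hrow : ∀ i : Fin n, ∑ j, G.lapMatrix ℂ i j = 0 := by
    intro i
    have := congrFun (G.lapMatrix_mulVec_const_eq_zero (R := ℂ)) i
    simpa [Matrix.mulVec, dotProduct] using this
  have hoff : ∀ i j : Fin n, G.connectedComponentMk i ≠ G.connectedComponentMk j →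
      G.lapMatrix ℂ i j = 0 := by
    intro i j hne
    have hij : i ≠ j := by rintro rfl; exact hne rfl
    have hadj : ¬ G.Adj i j := fun ha => hne (SimpleGraph.ConnectedComponent.connectedComponentMk_eq_of_adj ha)
    simp [SimpleGraph.lapMatrix, SimpleGraph.degMatrix, Matrix.sub_apply,
      Matrix.diagonal_apply_ne _ hij, hadj]
  have hcomp : ∀ c : G.ConnectedComponent,
      (∑ i ∈ Finset.univ.filter (fun i => G.connectedComponentMk i = c), f i) = 0 := by
    intro c
    have h0 : (inner ℂ (∑ i ∈ Finset.univ.filter (fun i => G.connectedComponentMk i = c), f i)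
        (∑ j ∈ Finset.univ.filter (fun j => G.connectedComponentMk j = c), f j) : ℂ) = 0 := by
      rw [sum_inner]
      refine Finset.sum_eq_zero fun i hi => ?_
      rw [inner_sum]
      simp_rw [hGram]
      have hic : G.connectedComponentMk i = c := (Finset.mem_filter.mp hi).2
      have hext : ∑ j ∈ Finset.univ.filter (fun j => G.connectedComponentMk j = c),
          G.lapMatrix ℂ i j = ∑ j, G.lapMatrix ℂ i j := by
        refine Finset.sum_subset (Finset.filter_subset _ _) fun j _ hj => ?_
        refine hoff i j fun hcc => hj ?_
        simp [Finset.mem_filter, ← hcc, hic]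
      rw [hext, hrow]
    exact inner_self_eq_zero.mp h0
  have hcanon : ∀ x, ∑ i, (inner ℂ (f i) x : ℂ) • S.symm (f i) = x := by
    intro x
    have : ∑ i, (inner ℂ (f i) x : ℂ) • S.symm (f i)
        = S.symm (∑ i, (inner ℂ (f i) x : ℂ) • f i) := by
      rw [map_sum]; simp_rw [map_smul]
    rw [this, ← hS, LinearEquiv.symm_apply_apply]
  constructor
  · intro hdual
    set g : Fin n → EuclideanSpace ℂ (Fin (n - m)) := fun i => h i - S.symm (f i) with hgdef
    have hg0 : ∀ x, ∑ i, (inner ℂ (f i) x : ℂ) • g i = 0 := by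
      intro x
      simp only [hgdef, smul_sub, Finset.sum_sub_distrib]
      rw [hdual x, hcanon x, sub_self]
    have hLg : ∀ j, ∑ i, G.lapMatrix ℂ i j • g i = 0 := by
      intro j
      have := hg0 (f j)
      simpa only [hGram] using this
    have hconst : ∀ i j, G.Reachable i j → g i = g j := by
      intro i j hij
      ext k
      refine lap_ker_complex' G (fun i => g i k) ?_ i j hij
      funext j'
      have := congrArg (EuclideanSpace.projₗ (𝕜 := ℂ) k) (hLg j')
      rw [map_sum, map_zero] at this
      simp only [EuclideanSpace.projₗ, PiLp.projₗ, map_smul, smul_eq_mul,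
        LinearMap.coe_mk, AddHom.coe_mk] at this
      simp only [Matrix.mulVec, dotProduct, Pi.zero_apply]
      calc ∑ i', G.lapMatrix ℂ j' i' * g i' k
          = ∑ i', G.lapMatrix ℂ i' j' * g i' k := by
            refine Finset.sum_congr rfl fun i' _ => ?_
            rw [(G.isSymm_lapMatrix (R := ℂ)).apply j' i']
        _ = 0 := this
    refine ⟨SimpleGraph.ConnectedComponent.lift g (fun v w p _ => hconst v w p.reachable),
      fun i => ?_⟩
    rw [SimpleGraph.ConnectedComponent.lift_mk]
    simp [hgdef]
  · rintro ⟨ν, hν⟩ x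
    have hnu : ∑ i, (inner ℂ (f i) x : ℂ) • ν (G.connectedComponentMk i) = 0 := by
      rw [← Finset.sum_fiberwise Finset.univ (fun i => G.connectedComponentMk i)
        (fun i => (inner ℂ (f i) x : ℂ) • ν (G.connectedComponentMk i))]
      refine Finset.sum_eq_zero fun c _ => ?_
      have h1 : ∑ i ∈ Finset.univ.filter (fun i => G.connectedComponentMk i = c),
          (inner ℂ (f i) x : ℂ) • ν (G.connectedComponentMk i)
          = ∑ i ∈ Finset.univ.filter (fun i => G.connectedComponentMk i = c),
            (inner ℂ (f i) x : ℂ) • ν c := by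
        refine Finset.sum_congr rfl fun i hi => ?_
        rw [(Finset.mem_filter.mp hi).2]
      rw [h1, ← Finset.sum_smul, ← sum_inner, hcomp c, inner_zero_left, zero_smul]
    simp_rw [hν, smul_add, Finset.sum_add_distrib, hcanon x, hnu, add_zero]
end

section
/- Let G be a simple graph on n vertices with Laplacian matrix L, and let f_1, ..., f_n be vectors spanning ℂ^k whose Gramian matrix equals L, i.e., ⟨f_j, f_i⟩ = L_{ij} for all i, j, with frame operator S. Let P be the n×n complex matrix whose (i,j) entry is ⟨S^{−1} f_j, S^{−1} f_i⟩ (the Gramian matrix of the canonical dual frame). Then P is the Moore-Penrose inverse of L: LPL = L, PLP = P, (LP)* = LP, and (PL)* = PL, where * denotes conjugate transpose. -/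
open Matrix

/-- Let `{f i}_{i=1}^n` be a frame for `ℂ^k` whose Gramian matrix equals the
Laplacian `L` of a simple graph `G`, with frame operator `S`. Then the Gramian matrix `P`
of the canonical dual frame `{S⁻¹ f i}` (with `(i,j)` entry `⟨S⁻¹f_j, S⁻¹f_i⟩`, i.e.
`⟪S⁻¹ f i, S⁻¹ f j⟫` in Mathlib's convention) is the Moore–Penrose inverse of `L`. -/
theorem stmt_10 (n k : ℕ) (G : SimpleGraph (Fin n)) [DecidableRel G.Adj]
    (f : Fin n → EuclideanSpace ℂ (Fin k))
    (hspan : Submodule.span ℂ (Set.range f) = ⊤)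
    (hGram : ∀ i j : Fin n, (inner ℂ (f i) (f j) : ℂ) = G.lapMatrix ℂ i j)
    (S : EuclideanSpace ℂ (Fin k) ≃ₗ[ℂ] EuclideanSpace ℂ (Fin k))
    (hS : ∀ x, S x = ∑ i, (inner ℂ (f i) x : ℂ) • f i)
    (P : Matrix (Fin n) (Fin n) ℂ)
    (hP : ∀ i j : Fin n, P i j = (inner ℂ (S.symm (f i)) (S.symm (f j)) : ℂ)) :
    G.lapMatrix ℂ * P * G.lapMatrix ℂ = G.lapMatrix ℂ ∧
    P * G.lapMatrix ℂ * P = P ∧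
    (G.lapMatrix ℂ * P)ᴴ = G.lapMatrix ℂ * P ∧
    (P * G.lapMatrix ℂ)ᴴ = P * G.lapMatrix ℂ := by
  set L := G.lapMatrix ℂ with hLdef
  -- key: sums against the frame give inner ℂ products with S
  have key : ∀ x y : EuclideanSpace ℂ (Fin k),
      ∑ m, (inner ℂ x (f m) : ℂ) * (inner ℂ (f m) y : ℂ) = (inner ℂ x (S y) : ℂ) := by
    intro x y
    rw [hS y, inner_sum]
    refine Finset.sum_congr rfl fun m _ => ?_
    rw [inner_smul_right]; ring
  -- S is self-adjoint
  have hsym : ∀ x y : EuclideanSpace ℂ (Fin k),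
      (inner ℂ (S x) y : ℂ) = (inner ℂ x (S y) : ℂ) := by
    intro x y
    rw [hS x, sum_inner, ← key x y]
    refine Finset.sum_congr rfl fun m _ => ?_
    rw [inner_smul_left, ← inner_conj_symm (f m) x, starRingEnd_self_apply]
  -- S⁻¹ is self-adjoint
  have hsymInv : ∀ x y : EuclideanSpace ℂ (Fin k),
      (inner ℂ (S.symm x) y : ℂ) = (inner ℂ x (S.symm y) : ℂ) := by
    intro x y
    calc (inner ℂ (S.symm x) y : ℂ)
        = (inner ℂ (S.symm x) (S (S.symm y)) : ℂ) := by rw [S.apply_symm_apply]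
      _ = (inner ℂ (S (S.symm x)) (S.symm y) : ℂ) := (hsym _ _).symm
      _ = (inner ℂ x (S.symm y) : ℂ) := by rw [S.apply_symm_apply]
  -- entries of L*P and P*L
  have hLP : ∀ i j, (L * P) i j = (inner ℂ (f i) (S.symm (f j)) : ℂ) := by
    intro i j
    rw [mul_apply]
    have : ∀ m, L i m * P m j
        = (inner ℂ (f i) (f m) : ℂ) * (inner ℂ (f m) (S.symm (S.symm (f j))) : ℂ) := by
      intro m
      rw [hP, ← hGram, ← hsymInv (f m) (S.symm (f j))]
    simp_rw [this]
    rw [key, S.apply_symm_apply]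
  have hPL : ∀ i j, (P * L) i j = (inner ℂ (S.symm (f i)) (f j) : ℂ) := by
    intro i j
    rw [mul_apply]
    have : ∀ m, P i m * L m j
        = (inner ℂ (S.symm (S.symm (f i))) (f m) : ℂ) * (inner ℂ (f m) (f j) : ℂ) := by
      intro m
      rw [hP, ← hGram, hsymInv (S.symm (f i)) (f m)]
    simp_rw [this]
    rw [key, hsymInv, S.symm_apply_apply]
  refine ⟨?_, ?_, ?_, ?_⟩
  · ext i j
    rw [mul_apply]
    have : ∀ m, (L * P) i m * L m j
        = (inner ℂ (S.symm (f i)) (f m) : ℂ) * (inner ℂ (f m) (f j) : ℂ) := by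
      intro m
      rw [hLP, ← hGram, ← hsymInv]
    simp_rw [this]
    rw [key, hsymInv, S.symm_apply_apply, hGram]
  · ext i j
    rw [mul_apply]
    have : ∀ m, (P * L) i m * P m j
        = (inner ℂ (S.symm (f i)) (f m) : ℂ) * (inner ℂ (f m) (S.symm (S.symm (f j))) : ℂ) := by
      intro m
      rw [hPL, hP, ← hsymInv (f m) (S.symm (f j))]
    simp_rw [this]
    rw [key, S.apply_symm_apply, hP]
  · ext i j
    rw [conjTranspose_apply, hLP j i, hLP i j, ← hsymInv, ← starRingEnd_apply,
      inner_conj_symm]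
  · ext i j
    rw [conjTranspose_apply, hPL j i, hPL i j, hsymInv, ← starRingEnd_apply,
      inner_conj_symm]
end

section
/- Let G be a simple graph on n vertices with Laplacian matrix L, and let f_1, ..., f_n be vectors spanning ℂ^k whose Gramian matrix equals L, with frame operator S. Let P be an n×n real matrix satisfying LPL = L, PLP = P, (LP)^T = LP, (PL)^T = PL (i.e., P is the Moore-Penrose inverse of L). Then for every i ∈ {1, ..., n}, ‖S^{−1} f_i‖² = P_{ii}. -/
open Matrix

/-- Uniqueness of the Moore–Penrose inverse of a complex matrix. -/
lemma mp_unique_aux {n : ℕ} (A X Y : Matrix (Fin n) (Fin n) ℂ)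
    (hX1 : A * X * A = A) (hX2 : X * A * X = X)
    (hX3 : (A * X)ᴴ = A * X) (hX4 : (X * A)ᴴ = X * A)
    (hY1 : A * Y * A = A) (hY2 : Y * A * Y = Y)
    (hY3 : (A * Y)ᴴ = A * Y) (hY4 : (Y * A)ᴴ = Y * A) : X = Y := by
  have k1 : X = X * Xᴴ * Aᴴ := by
    calc X = X * A * X := hX2.symm
      _ = X * (A * X) := by rw [mul_assoc]
      _ = X * (A * X)ᴴ := by rw [hX3]
      _ = X * (Xᴴ * Aᴴ) := by rw [conjTranspose_mul]
      _ = X * Xᴴ * Aᴴ := by rw [mul_assoc]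
  have k2 : X = X * A * Y := by
    calc X = X * Xᴴ * Aᴴ := k1
      _ = X * Xᴴ * (A * Y * A)ᴴ := by rw [hY1]
      _ = X * Xᴴ * (Aᴴ * (Yᴴ * Aᴴ)) := by
          rw [conjTranspose_mul, conjTranspose_mul, mul_assoc]
      _ = (X * Xᴴ * Aᴴ) * (Yᴴ * Aᴴ) := by
          rw [mul_assoc (X * Xᴴ)]
      _ = X * (Yᴴ * Aᴴ) := by rw [← k1]
      _ = X * (A * Y)ᴴ := by rw [conjTranspose_mul]
      _ = X * (A * Y) := by rw [hY3]
      _ = X * A * Y := by rw [mul_assoc]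
  have k3 : Y = Aᴴ * Yᴴ * Y := by
    calc Y = Y * A * Y := hY2.symm
      _ = (Y * A)ᴴ * Y := by rw [hY4]
      _ = Aᴴ * Yᴴ * Y := by rw [conjTranspose_mul]
  have k4 : Y = X * A * Y := by
    calc Y = Aᴴ * Yᴴ * Y := k3
      _ = (A * X * A)ᴴ * Yᴴ * Y := by rw [hX1]
      _ = (Aᴴ * Xᴴ * Aᴴ) * Yᴴ * Y := by
          simp only [conjTranspose_mul, mul_assoc]
      _ = Aᴴ * Xᴴ * (Aᴴ * Yᴴ * Y) := by
          simp only [mul_assoc]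
      _ = Aᴴ * Xᴴ * Y := by rw [← k3]
      _ = (X * A)ᴴ * Y := by rw [conjTranspose_mul]
      _ = X * A * Y := by rw [hX4]
  rw [k2, ← k4]

/-- Let `{f i}_{i=1}^n` be a frame for `ℂ^k` whose Gramian matrix equals the
Laplacian `L` of a simple graph `G`, with frame operator `S`, and let `P` be the
Moore–Penrose inverse of `L` (as a real matrix). Then `‖S⁻¹ f i‖² = P i i` for every `i`. -/
theorem stmt_11 (n k : ℕ) (G : SimpleGraph (Fin n)) [DecidableRel G.Adj]
    (f : Fin n → EuclideanSpace ℂ (Fin k))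
    (hspan : Submodule.span ℂ (Set.range f) = ⊤)
    (hGram : ∀ i j : Fin n, (inner ℂ (f i) (f j) : ℂ) = G.lapMatrix ℂ i j)
    (S : EuclideanSpace ℂ (Fin k) ≃ₗ[ℂ] EuclideanSpace ℂ (Fin k))
    (hS : ∀ x, S x = ∑ i, (inner ℂ (f i) x : ℂ) • f i)
    (P : Matrix (Fin n) (Fin n) ℝ)
    (h1 : G.lapMatrix ℝ * P * G.lapMatrix ℝ = G.lapMatrix ℝ)
    (h2 : P * G.lapMatrix ℝ * P = P)
    (h3 : (G.lapMatrix ℝ * P)ᵀ = G.lapMatrix ℝ * P)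
    (h4 : (P * G.lapMatrix ℝ)ᵀ = P * G.lapMatrix ℝ) :
    ∀ i : Fin n, ‖S.symm (f i)‖ ^ 2 = P i i := by
  -- Basic facts about the frame operator
  have hSadj : ∀ x y : EuclideanSpace ℂ (Fin k),
      (inner ℂ (S x) y : ℂ) = inner ℂ x (S y) := by
    intro x y
    rw [hS x, hS y, sum_inner, inner_sum]
    refine Finset.sum_congr rfl fun c _ => ?_
    rw [inner_smul_left, inner_smul_right, ← inner_conj_symm x (f c)]
    ring
  have hSymmAdj : ∀ x y : EuclideanSpace ℂ (Fin k),
      (inner ℂ (S.symm x) y : ℂ) = inner ℂ x (S.symm y) := by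
    intro x y
    calc (inner ℂ (S.symm x) y : ℂ) = inner ℂ (S.symm x) (S (S.symm y)) := by
          rw [S.apply_symm_apply]
      _ = inner ℂ (S (S.symm x)) (S.symm y) := (hSadj _ _).symm
      _ = inner ℂ x (S.symm y) := by rw [S.apply_symm_apply]
  have key : ∀ x y : EuclideanSpace ℂ (Fin k),
      ∑ c, (inner ℂ x (f c) : ℂ) * inner ℂ (f c) y = inner ℂ x (S y) := by
    intro x y
    rw [hS y, inner_sum]
    exact Finset.sum_congr rfl fun c _ => by rw [inner_smul_right]; ring
  -- The candidate Moore–Penrose inverse of L over ℂ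
  set M : Matrix (Fin n) (Fin n) ℂ :=
    Matrix.of (fun a b => (inner ℂ (f a) (S.symm (S.symm (f b))) : ℂ)) with hM
  set Lc : Matrix (Fin n) (Fin n) ℂ := G.lapMatrix ℂ with hLc
  have hGram' : ∀ a b, Lc a b = (inner ℂ (f a) (f b) : ℂ) := fun a b => (hGram a b).symm
  -- entries of L*M and M*L
  have eLM : ∀ a b, (Lc * M) a b = (inner ℂ (f a) (S.symm (f b)) : ℂ) := by
    intro a b
    rw [Matrix.mul_apply]
    calc ∑ c, Lc a c * M c b
        = ∑ c, (inner ℂ (f a) (f c) : ℂ) * inner ℂ (f c) (S.symm (S.symm (f b))) := by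
          refine Finset.sum_congr rfl fun c _ => by rw [hGram']; rfl
      _ = inner ℂ (f a) (S (S.symm (S.symm (f b)))) := key _ _
      _ = inner ℂ (f a) (S.symm (f b)) := by rw [S.apply_symm_apply]
  have eML : ∀ a b, (M * Lc) a b = (inner ℂ (f a) (S.symm (f b)) : ℂ) := by
    intro a b
    rw [Matrix.mul_apply]
    calc ∑ c, M a c * Lc c b
        = ∑ c, (inner ℂ (S.symm (S.symm (f a))) (f c) : ℂ) * inner ℂ (f c) (f b) := by
          refine Finset.sum_congr rfl fun c _ => by
            rw [hGram']
            show (inner ℂ (f a) (S.symm (S.symm (f c))) : ℂ) * _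
              = (inner ℂ (S.symm (S.symm (f a))) (f c) : ℂ) * _
            rw [hSymmAdj, hSymmAdj]
      _ = inner ℂ (S.symm (S.symm (f a))) (S (f b)) := key _ _
      _ = inner ℂ (f a) (S.symm (f b)) := by
          rw [hSymmAdj, hSymmAdj, S.symm_apply_apply]
  -- M satisfies the Moore–Penrose axioms for Lc
  have hM1 : Lc * M * Lc = Lc := by
    ext a b
    rw [Matrix.mul_apply]
    calc ∑ c, (Lc * M) a c * Lc c b
        = ∑ c, (inner ℂ (S.symm (f a)) (f c) : ℂ) * inner ℂ (f c) (f b) := by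
          refine Finset.sum_congr rfl fun c _ => by
            rw [eLM, hGram', hSymmAdj]
      _ = inner ℂ (S.symm (f a)) (S (f b)) := key _ _
      _ = Lc a b := by rw [hSymmAdj, S.symm_apply_apply, hGram']
  have hM2 : M * Lc * M = M := by
    ext a b
    rw [Matrix.mul_apply]
    calc ∑ c, (M * Lc) a c * M c b
        = ∑ c, (inner ℂ (S.symm (f a)) (f c) : ℂ)
            * inner ℂ (f c) (S.symm (S.symm (f b))) := by
          refine Finset.sum_congr rfl fun c _ => by rw [eML, hSymmAdj]; rfl
      _ = inner ℂ (S.symm (f a)) (S (S.symm (S.symm (f b)))) := key _ _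
      _ = M a b := by rw [S.apply_symm_apply, hSymmAdj]; rfl
  have hM3 : (Lc * M)ᴴ = Lc * M := by
    ext a b
    rw [Matrix.conjTranspose_apply, eLM, eLM, ← starRingEnd_apply,
      ← hSymmAdj (f a) (f b)]
    exact inner_conj_symm _ _
  have hM4 : (M * Lc)ᴴ = M * Lc := by
    ext a b
    rw [Matrix.conjTranspose_apply, eML, eML, ← starRingEnd_apply,
      ← hSymmAdj (f a) (f b)]
    exact inner_conj_symm _ _
  -- The real matrix P, mapped to ℂ, also satisfies the axioms
  have hmap : Lc = (G.lapMatrix ℝ).map (algebraMap ℝ ℂ) := by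
    ext a b
    rw [hLc]
    simp only [SimpleGraph.lapMatrix, Matrix.sub_apply, SimpleGraph.degMatrix,
      Matrix.diagonal_apply, SimpleGraph.adjMatrix_apply, Matrix.map_apply, map_sub]
    split_ifs <;> push_cast <;> ring
  set P' : Matrix (Fin n) (Fin n) ℂ := P.map (algebraMap ℝ ℂ) with hP'
  have hct : ∀ B : Matrix (Fin n) (Fin n) ℝ,
      ((B.map (algebraMap ℝ ℂ))ᴴ = Bᵀ.map (algebraMap ℝ ℂ)) := by
    intro B
    ext a b
    simp [Matrix.conjTranspose_apply, Matrix.map_apply, Matrix.transpose_apply,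
      Complex.conj_ofReal]
  have hmul : ∀ B C : Matrix (Fin n) (Fin n) ℝ,
      (B * C).map (algebraMap ℝ ℂ) = B.map (algebraMap ℝ ℂ) * C.map (algebraMap ℝ ℂ) :=
    fun B C => Matrix.map_mul
  have hP1 : Lc * P' * Lc = Lc := by
    rw [hmap, hP', ← hmul, ← hmul, h1]
  have hP2 : P' * Lc * P' = P' := by
    rw [hmap, hP', ← hmul, ← hmul, h2]
  have hP3 : (Lc * P')ᴴ = Lc * P' := by
    rw [hmap, hP', ← hmul, hct, h3]
  have hP4 : (P' * Lc)ᴴ = P' * Lc := by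
    rw [hmap, hP', ← hmul, hct, h4]
  have hMP : M = P' := mp_unique_aux Lc M P' hM1 hM2 hM3 hM4 hP1 hP2 hP3 hP4
  intro i
  have hMi : M i i = ((‖S.symm (f i)‖ : ℝ) : ℂ) ^ 2 := by
    show (inner ℂ (f i) (S.symm (S.symm (f i))) : ℂ) = _
    rw [← hSymmAdj, inner_self_eq_norm_sq_to_K]
    norm_cast
  have hPi : M i i = ((P i i : ℝ) : ℂ) := by
    rw [hMP]
    simp [hP', Matrix.map_apply]
  have h5 : ((‖S.symm (f i)‖ : ℝ) : ℂ) ^ 2 = ((P i i : ℝ) : ℂ) := by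
    rw [← hMi, hPi]
  rw [← Complex.ofReal_pow] at h5
  exact_mod_cast h5
end

section
/- Let G be a walk-regular simple graph on n vertices with Laplacian matrix L, and let f_1, ..., f_n be vectors spanning ℂ^k whose Gramian matrix equals L, with frame operator S. Then the quantity ‖f_i‖ · ‖S^{−1} f_i‖ is independent of i: for all i, j ∈ {1, ..., n}, ‖f_i‖‖S^{−1} f_i‖ = ‖f_j‖‖S^{−1} f_j‖. -/
open Polynomial Finset Matrix

/-- Let `G` be a walk-regular simple graph on `n` vertices and `{f i}_{i=1}^n`
a frame for `ℂ^k` whose Gramian matrix equals the Laplacian of `G`, with frame operator `S`.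
Then `‖f i‖ * ‖S⁻¹ f i‖` does not depend on `i`. -/
theorem stmt_12 (n k : ℕ) (G : SimpleGraph (Fin n)) [DecidableRel G.Adj]
    (hWR : ∀ p : ℕ, 0 < p →
      ∀ i j : Fin n, ((G.adjMatrix ℝ) ^ p) i i = ((G.adjMatrix ℝ) ^ p) j j)
    (f : Fin n → EuclideanSpace ℂ (Fin k))
    (hspan : Submodule.span ℂ (Set.range f) = ⊤)
    (hGram : ∀ i j : Fin n, (inner ℂ (f i) (f j) : ℂ) = G.lapMatrix ℂ i j)
    (S : EuclideanSpace ℂ (Fin k) ≃ₗ[ℂ] EuclideanSpace ℂ (Fin k))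
    (hS : ∀ x, S x = ∑ i, (inner ℂ (f i) x : ℂ) • f i) :
    ∀ i j : Fin n, ‖f i‖ * ‖S.symm (f i)‖ = ‖f j‖ * ‖S.symm (f j)‖ := by
  set A : Matrix (Fin n) (Fin n) ℝ := G.adjMatrix ℝ with hAdef
  set L : Matrix (Fin n) (Fin n) ℝ := G.lapMatrix ℝ with hLdef
  -- diagonal of A^q is constant (including q = 0)
  have hA : ∀ q : ℕ, ∀ i j : Fin n, (A ^ q) i i = (A ^ q) j j := by
    intro q i j
    rcases Nat.eq_zero_or_pos q with h | h
    · subst h; simp [Matrix.one_apply]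
    · exact hWR q h i j
  -- all degrees are equal
  have hdeg : ∀ i j : Fin n, (G.degree i : ℝ) = (G.degree j : ℝ) := by
    intro i j
    have h2 := hWR 2 (by norm_num) i j
    rwa [pow_two, G.adjMatrix_mul_self_apply_self, G.adjMatrix_mul_self_apply_self] at h2
  -- diagonal of L^p is constant
  have hLdiag : ∀ p : ℕ, ∀ i j : Fin n, (L ^ p) i i = (L ^ p) j j := by
    intro p i j
    set d : ℝ := (G.degree i : ℝ) with hd
    have hLeq : L = d • (1 : Matrix (Fin n) (Fin n) ℝ) + (-A) := by
      ext s t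
      simp only [hLdef, SimpleGraph.lapMatrix, SimpleGraph.degMatrix, Matrix.sub_apply,
        Matrix.add_apply, Matrix.neg_apply, Matrix.smul_apply, Matrix.one_apply,
        Matrix.diagonal_apply]
      rcases eq_or_ne s t with rfl | hst
      · simp [hAdef, hdeg s i, hd]
      · simp [hAdef, hst]
    have hcomm : Commute (d • (1 : Matrix (Fin n) (Fin n) ℝ)) (-A) := by
      unfold Commute SemiconjBy
      simp [Matrix.smul_mul, Matrix.mul_smul]
    have hbin := hcomm.add_pow' p
    rw [hLeq, hbin]
    simp only [Matrix.sum_apply]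
    apply Finset.sum_congr rfl
    intro m _
    rw [_root_.smul_pow, one_pow, show (-A) = (-1 : ℝ) • A from by simp, _root_.smul_pow]
    simp only [Matrix.smul_mul, Matrix.one_mul, Matrix.mul_smul, Matrix.smul_apply,
      smul_eq_mul, smul_smul, nsmul_eq_mul]
    rw [hA m.2 i j]
  -- Gram entries as real casts
  have hGram' : ∀ i j : Fin n, (inner ℂ (f i) (f j) : ℂ) = ((L i j : ℝ) : ℂ) := by
    intro i j
    rw [hGram]
    simp only [hLdef, SimpleGraph.lapMatrix, SimpleGraph.degMatrix, Matrix.sub_apply,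
      Matrix.diagonal_apply, SimpleGraph.adjMatrix_apply]
    rcases eq_or_ne i j with rfl | hij
    · simp
    · simp only [hij, if_neg hij]
      push_cast
      split_ifs <;> norm_num
  set T : Module.End ℂ (EuclideanSpace ℂ (Fin k)) := S.toLinearMap with hTdef
  have hT : ∀ x, T x = ∑ i, (inner ℂ (f i) x : ℂ) • f i := hS
  -- powers of T on frame vectors
  have hTpow : ∀ (m : ℕ) (j : Fin n),
      (T ^ m) (f j) = ∑ t, (((L ^ m) t j : ℝ) : ℂ) • f t := by
    intro m
    induction m with
    | zero =>
      intro j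
      simp [Matrix.one_apply, apply_ite (Complex.ofReal)]
    | succ m ih =>
      intro j
      rw [pow_succ', Module.End.mul_apply, ih, map_sum]
      have step : ∀ t : Fin n, T ((((L ^ m) t j : ℝ) : ℂ) • f t)
          = ∑ s, ((L s t * (L ^ m) t j : ℝ) : ℂ) • f s := by
        intro t
        rw [_root_.map_smul, hT (f t), Finset.smul_sum]
        apply Finset.sum_congr rfl
        intro s _
        rw [hGram' s t, smul_smul]
        congr 1
        push_cast
        ring
      rw [Finset.sum_congr rfl fun t _ => step t]
      rw [Finset.sum_comm]
      apply Finset.sum_congr rfl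
      intro s _
      rw [← Finset.sum_smul]
      congr 1
      rw [pow_succ' L m, Matrix.mul_apply]
      push_cast
      rfl
  -- symmetry of powers of L
  have hsymm : ∀ (m : ℕ) (s t : Fin n), (L ^ m) s t = (L ^ m) t s := by
    intro m s t
    have h : ((L ^ m)ᵀ : Matrix (Fin n) (Fin n) ℝ) = L ^ m := by
      rw [Matrix.transpose_pow]
      congr 1
      exact G.isSymm_lapMatrix ℝ
    calc (L ^ m) s t = ((L ^ m)ᵀ) t s := rfl
    _ = (L ^ m) t s := by rw [h]
  -- inner products of powers applied to frame vectors
  have hInnerPow : ∀ (m l : ℕ) (i : Fin n),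
      (inner ℂ ((T ^ m) (f i)) ((T ^ l) (f i)) : ℂ) = (((L ^ (m + l + 1)) i i : ℝ) : ℂ) := by
    intro m l i
    rw [hTpow, hTpow, sum_inner]
    have step : ∀ s : Fin n,
        (inner ℂ ((((L ^ m) s i : ℝ) : ℂ) • f s) (∑ t, (((L ^ l) t i : ℝ) : ℂ) • f t) : ℂ)
        = (((L ^ m) s i * ∑ t, L s t * (L ^ l) t i : ℝ) : ℂ) := by
      intro s
      rw [inner_smul_left, inner_sum, Complex.conj_ofReal]
      simp_rw [inner_smul_right, hGram']
      push_cast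
      simp only [Finset.mul_sum]
      apply Finset.sum_congr rfl
      intro t _
      ring
    rw [Finset.sum_congr rfl fun s _ => step s]
    have key : ∑ s, (L ^ m) s i * ∑ t, L s t * (L ^ l) t i = (L ^ (m + l + 1)) i i := by
      have h1 : ∀ s : Fin n, (∑ t, L s t * (L ^ l) t i) = (L ^ (l + 1)) s i := by
        intro s
        rw [pow_succ' L l, Matrix.mul_apply]
      simp_rw [h1]
      have h2 : ∀ s, (L ^ m) s i = (L ^ m) i s := fun s => hsymm m s i
      simp_rw [h2]
      rw [← Matrix.mul_apply, ← pow_add]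
      have : m + (l + 1) = m + l + 1 := by omega
      rw [this]
    rw [← key]
    push_cast
    rfl
  -- S.symm as a polynomial in T
  have hdet : LinearMap.det T ≠ 0 := S.isUnit_det'.ne_zero
  set χ : Polynomial ℂ := T.charpoly with hχ
  have hc0 : χ.coeff 0 ≠ 0 := by
    intro h
    apply hdet
    rw [T.det_eq_sign_charpoly_coeff, ← hχ, h, mul_zero]
  set P : Polynomial ℂ := C (-(χ.coeff 0)⁻¹) * χ.divX with hP
  have hTP : T * (aeval T P) = 1 := by
    have h0 := T.aeval_self_charpoly
    rw [← hχ] at h0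
    have h1 : aeval T (X * χ.divX + C (χ.coeff 0)) = 0 := by rw [χ.X_mul_divX_add]; exact h0
    rw [_root_.map_add, _root_.map_mul, aeval_X, aeval_C] at h1
    have h2 : T * aeval T χ.divX = -(algebraMap ℂ _ (χ.coeff 0)) :=
      eq_neg_of_add_eq_zero_left h1
    rw [hP, _root_.map_mul, aeval_C, Algebra.algebraMap_eq_smul_one, smul_mul_assoc, one_mul,
      mul_smul_comm, h2, Algebra.algebraMap_eq_smul_one, smul_neg, smul_smul]
    simp [neg_mul, inv_mul_cancel₀ hc0]
  have hSymmEq : ∀ x, S.symm x = (aeval T P) x := by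
    intro x
    have hx : T ((aeval T P) x) = x := by
      calc T ((aeval T P) x) = (T * aeval T P) x := rfl
      _ = x := by rw [hTP]; rfl
    have h3 := congrArg S.symm hx
    rw [show S.symm (T ((aeval T P) x)) = (aeval T P) x from S.symm_apply_apply _] at h3
    exact h3.symm
  -- the main invariance
  have hInv : ∀ i j : Fin n,
      (inner ℂ (S.symm (f i)) (S.symm (f i)) : ℂ) = inner ℂ (S.symm (f j)) (S.symm (f j)) := by
    intro i j
    have expand : ∀ v : Fin n, (aeval T P) (f v)
        = ∑ m ∈ Finset.range (P.natDegree + 1), P.coeff m • (T ^ m) (f v) := by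
      intro v
      rw [aeval_eq_sum_range]
      simp [LinearMap.sum_apply, LinearMap.smul_apply]
    have key : ∀ v : Fin n, (inner ℂ ((aeval T P) (f v)) ((aeval T P) (f v)) : ℂ)
        = ∑ m ∈ Finset.range (P.natDegree + 1), ∑ l ∈ Finset.range (P.natDegree + 1),
            (starRingEnd ℂ) (P.coeff m) * P.coeff l * (((L ^ (m + l + 1)) v v : ℝ) : ℂ) := by
      intro v
      rw [expand, sum_inner]
      apply Finset.sum_congr rfl
      intro m _
      rw [inner_smul_left, inner_sum, Finset.mul_sum]
      apply Finset.sum_congr rfl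
      intro l _
      rw [inner_smul_right, hInnerPow m l v]
      ring
    rw [hSymmEq, hSymmEq, key i, key j]
    apply Finset.sum_congr rfl
    intro m _
    apply Finset.sum_congr rfl
    intro l _
    rw [hLdiag (m + l + 1) i j]
  -- conclude
  intro i j
  have h1 : ‖f i‖ = ‖f j‖ := by
    have hLd1 : L i i = L j j := by have := hLdiag 1 i j; rwa [pow_one] at this
    have hi : (inner ℂ (f i) (f i) : ℂ) = inner ℂ (f j) (f j) := by
      rw [hGram' i i, hGram' j j]; exact congrArg _ hLd1
    have hsq : ‖f i‖ ^ 2 = ‖f j‖ ^ 2 := by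
      rw [← inner_self_eq_norm_sq (𝕜 := ℂ) (f i), ← inner_self_eq_norm_sq (𝕜 := ℂ) (f j)]
      exact congrArg _ hi
    nlinarith [norm_nonneg (f i), norm_nonneg (f j)]
  have h2 : ‖S.symm (f i)‖ = ‖S.symm (f j)‖ := by
    have hsq : ‖S.symm (f i)‖ ^ 2 = ‖S.symm (f j)‖ ^ 2 := by
      rw [← inner_self_eq_norm_sq (𝕜 := ℂ) (S.symm (f i)),
        ← inner_self_eq_norm_sq (𝕜 := ℂ) (S.symm (f j))]
      exact congrArg _ (hInv i j)
    nlinarith [norm_nonneg (S.symm (f i)), norm_nonneg (S.symm (f j))]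
  rw [h1, h2]
end

section
/- Let G be a walk-regular simple graph on n vertices with Laplacian matrix L, and let F = {f_i}_{i=1}^n be a frame generated by G for ℂ^k (vectors spanning ℂ^k with Gramian matrix equal to L), with frame operator S. Then the canonical dual frame {S^{−1} f_i}_{i=1}^n is the unique optimal dual frame of F for 1-erasure: for every dual frame {h_i}_{i=1}^n of F, max_{1≤i≤n} ‖f_i‖‖h_i‖ ≥ max_{1≤i≤n} ‖f_i‖‖S^{−1} f_i‖, and if equality holds then h_i = S^{−1} f_i for all i. -/
open Polynomial Finset

set_option maxHeartbeats 1000000 in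
/-- Let `G` be a walk-regular simple graph on `n` vertices and
`F = {f i}_{i=1}^n` a frame for `ℂ^k` generated by `G`, with frame operator `S`. Then the
canonical dual `{S⁻¹ f i}` is the unique optimal dual frame of `F` for 1-erasure: every
dual frame `{h i}` of `F` satisfies `maxᵢ ‖f i‖‖h i‖ ≥ maxᵢ ‖f i‖‖S⁻¹ f i‖`, and if
equality holds then `h i = S⁻¹ f i` for all `i`. -/
theorem stmt_13 (n k : ℕ) (G : SimpleGraph (Fin n)) [DecidableRel G.Adj]
    (hWR : ∀ p : ℕ, 0 < p →
      ∀ i j : Fin n, ((G.adjMatrix ℝ) ^ p) i i = ((G.adjMatrix ℝ) ^ p) j j)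
    (f : Fin n → EuclideanSpace ℂ (Fin k))
    (hspan : Submodule.span ℂ (Set.range f) = ⊤)
    (hGram : ∀ i j : Fin n, (inner ℂ (f i) (f j) : ℂ) = G.lapMatrix ℂ i j)
    (S : EuclideanSpace ℂ (Fin k) ≃ₗ[ℂ] EuclideanSpace ℂ (Fin k))
    (hS : ∀ x, S x = ∑ i, (inner ℂ (f i) x : ℂ) • f i)
    (h : Fin n → EuclideanSpace ℂ (Fin k))
    (hdual : ∀ x, ∑ i, (inner ℂ (f i) x : ℂ) • h i = x) :
    (⨆ i, ‖f i‖ * ‖S.symm (f i)‖) ≤ (⨆ i, ‖f i‖ * ‖h i‖) ∧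
    ((⨆ i, ‖f i‖ * ‖h i‖) = (⨆ i, ‖f i‖ * ‖S.symm (f i)‖) →
      ∀ i, h i = S.symm (f i)) := by
  classical
  set L : Matrix (Fin n) (Fin n) ℂ := G.lapMatrix ℂ with hLdef
  set T : Module.End ℂ (EuclideanSpace ℂ (Fin k)) := (S : EuclideanSpace ℂ (Fin k) →ₗ[ℂ] EuclideanSpace ℂ (Fin k)) with hTdef
  have hSa : ∀ x y : EuclideanSpace ℂ (Fin k), (inner ℂ (S x) y : ℂ) = inner ℂ x (S y) := by
    intro x y
    rw [hS x, hS y]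
    simp only [sum_inner, inner_sum, inner_smul_left, inner_smul_right, inner_conj_symm]
    exact Finset.sum_congr rfl fun i _ => mul_comm _ _
  have hSsa : ∀ x y : EuclideanSpace ℂ (Fin k), (inner ℂ (S.symm x) y : ℂ) = inner ℂ x (S.symm y) := by
    intro x y
    conv_lhs => rw [show y = S (S.symm y) from (S.apply_symm_apply y).symm]
    rw [← hSa, S.apply_symm_apply]
  have hpowL : ∀ (m : ℕ) (j : Fin n), (T ^ m) (f j) = ∑ i, (L ^ m) i j • f i := by
    intro m
    induction m with
    | zero => intro j; simp [Matrix.one_apply]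
    | succ m ih =>
      intro j
      rw [pow_succ', Module.End.mul_apply, ih j]
      show S (∑ i, (L ^ m) i j • f i) = _
      rw [map_sum]
      simp only [map_smul]
      have : ∀ i, (L ^ m) i j • S (f i) = ∑ p, ((L p i) * (L ^ m) i j) • f p := by
        intro i
        rw [hS (f i), Finset.smul_sum]
        refine Finset.sum_congr rfl fun p _ => ?_
        rw [smul_smul, hGram, mul_comm]
      rw [Finset.sum_congr rfl fun i _ => this i, Finset.sum_comm]
      refine Finset.sum_congr rfl fun p _ => ?_
      rw [← Finset.sum_smul, pow_succ', Matrix.mul_apply]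
  have haeval : ∀ (q : Polynomial ℂ) (j : Fin n),
      (Polynomial.aeval T q) (f j) = ∑ i, (Polynomial.aeval L q) i j • f i := by
    intro q
    induction q using Polynomial.induction_on' with
    | add p r hp hr =>
      intro j
      simp only [map_add, LinearMap.add_apply, Matrix.add_apply, add_smul,
        Finset.sum_add_distrib, hp j, hr j]
    | monomial m a =>
      intro j
      rw [Polynomial.aeval_monomial, Polynomial.aeval_monomial]
      rw [Module.End.mul_apply]
      have h1 : ((algebraMap ℂ (Module.End ℂ (EuclideanSpace ℂ (Fin k)))) a) ((T ^ m) (f j))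
          = a • ((T ^ m) (f j)) := rfl
      rw [h1, hpowL m j, Finset.smul_sum]
      refine Finset.sum_congr rfl fun i _ => ?_
      rw [smul_smul]
      congr 1
      rw [Matrix.mul_apply]
      simp [Matrix.algebraMap_matrix_apply, Finset.sum_ite_eq, mul_comm]
  have hinner_aeval : ∀ (q : Polynomial ℂ) (i : Fin n),
      (inner ℂ (f i) ((Polynomial.aeval T q) (f i)) : ℂ)
        = (Polynomial.aeval L (Polynomial.X * q)) i i := by
    intro q i
    rw [haeval q i, inner_sum]
    simp only [inner_smul_right, hGram]
    rw [map_mul, Polynomial.aeval_X, Matrix.mul_apply]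
    exact Finset.sum_congr rfl fun p _ => mul_comm _ _
  have hA : G.adjMatrix ℂ = (G.adjMatrix ℝ).map (algebraMap ℝ ℂ) := by
    ext i j; by_cases hadj : G.Adj i j <;> simp [hadj]
  have hApow : ∀ p : ℕ, (G.adjMatrix ℂ) ^ p = ((G.adjMatrix ℝ) ^ p).map (algebraMap ℝ ℂ) := by
    intro p
    rw [hA, ← RingHom.mapMatrix_apply, ← RingHom.mapMatrix_apply, ← map_pow]
  have hWRC : ∀ (p : ℕ) (i j : Fin n), ((G.adjMatrix ℂ) ^ p) i i = ((G.adjMatrix ℂ) ^ p) j j := by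
    intro p i j
    rcases Nat.eq_zero_or_pos p with h0 | hp
    · subst h0; simp
    · rw [hApow p]; simp only [Matrix.map_apply]; rw [hWR p hp i j]
  have hreg : ∀ i j : Fin n, (G.degree i : ℂ) = (G.degree j : ℂ) := by
    intro i j
    have h2 := hWR 2 (by norm_num) i j
    rw [pow_two, SimpleGraph.adjMatrix_mul_self_apply_self,
      SimpleGraph.adjMatrix_mul_self_apply_self] at h2
    exact_mod_cast h2
  have hdiagA : ∀ (q : Polynomial ℂ) (i j : Fin n),
      (Polynomial.aeval (G.adjMatrix ℂ) q) i i = (Polynomial.aeval (G.adjMatrix ℂ) q) j j := by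
    intro q
    induction q using Polynomial.induction_on' with
    | add p r hp hr => intro i j; simp only [map_add, Matrix.add_apply, hp i j, hr i j]
    | monomial m a =>
      intro i j
      rw [Polynomial.aeval_monomial]
      simp only [Matrix.mul_apply, Matrix.algebraMap_matrix_apply, ite_mul, zero_mul,
        Finset.sum_ite_eq, Finset.mem_univ, if_true]
      rw [hWRC m i j]
  have hLA : ∀ i₀ : Fin n,
      L = Polynomial.aeval (G.adjMatrix ℂ) (Polynomial.C ((G.degree i₀ : ℂ)) - Polynomial.X) := by
    intro i₀
    rw [map_sub, Polynomial.aeval_C, Polynomial.aeval_X]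
    ext i j
    simp only [hLdef, SimpleGraph.lapMatrix, SimpleGraph.degMatrix, Matrix.sub_apply,
      Matrix.diagonal_apply, Matrix.algebraMap_matrix_apply]
    congr 1
    split
    · exact hreg i i₀
    · rfl
  have hdiagL : ∀ (q : Polynomial ℂ) (i j : Fin n),
      (Polynomial.aeval L q) i i = (Polynomial.aeval L q) j j := by
    intro q i j
    rw [hLA i, ← Polynomial.aeval_comp]
    exact hdiagA _ i j
  -- S.symm is a polynomial in T
  have hpoly : ∃ p : Polynomial ℂ, ∀ x, S.symm x = (Polynomial.aeval T p) x := by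
    set c := T.charpoly with hc
    have ha0 : c.coeff 0 ≠ 0 := by
      intro h0
      have hdet : LinearMap.det T ≠ 0 := (LinearEquiv.isUnit_det' S).ne_zero
      rw [LinearMap.det_eq_sign_charpoly_coeff, ← hc, h0, mul_zero] at hdet
      exact hdet rfl
    refine ⟨Polynomial.C (-(c.coeff 0)⁻¹) * c.divX, fun x => ?_⟩
    have hmul : (Polynomial.aeval T (Polynomial.C (-(c.coeff 0)⁻¹) * c.divX)) * T = 1 := by
      have h2 : c.divX * Polynomial.X = c - Polynomial.C (c.coeff 0) :=
        eq_sub_of_add_eq c.divX_mul_X_add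
      have h3 : (Polynomial.aeval T c.divX) * T
          = - (algebraMap ℂ (Module.End ℂ (EuclideanSpace ℂ (Fin k))) (c.coeff 0)) := by
        calc (Polynomial.aeval T c.divX) * T
            = Polynomial.aeval T (c.divX * Polynomial.X) := by rw [map_mul, Polynomial.aeval_X]
          _ = Polynomial.aeval T c - algebraMap ℂ _ (c.coeff 0) := by
              rw [h2, map_sub, Polynomial.aeval_C]
          _ = - algebraMap ℂ _ (c.coeff 0) := by
              rw [hc, LinearMap.aeval_self_charpoly, zero_sub]
      rw [map_mul, Polynomial.aeval_C, mul_assoc, h3]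
      have h4 : (-(c.coeff 0)⁻¹) * (c.coeff 0) = -1 := by field_simp
      rw [mul_neg, ← map_mul, h4, map_neg, map_one, neg_neg]
    have := congrArg (fun (g : Module.End ℂ (EuclideanSpace ℂ (Fin k))) => g (S.symm x)) hmul
    simp only [Module.End.mul_apply, Module.End.one_apply] at this
    have hT : T (S.symm x) = x := S.apply_symm_apply x
    rw [hT] at this
    exact this.symm
  have hfc : ∀ i j : Fin n, ‖f i‖ = ‖f j‖ := by
    intro i j
    have hLd : L i i = L j j := by
      have := hdiagL Polynomial.X i j
      rwa [Polynomial.aeval_X] at this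
    have e1 : ∀ m : Fin n, (inner ℂ (f m) (f m) : ℂ) = ((‖f m‖ : ℂ)) ^ 2 := fun m =>
      inner_self_eq_norm_sq_to_K (f m)
    have hsq : ((‖f i‖ : ℂ)) ^ 2 = ((‖f j‖ : ℂ)) ^ 2 := by
      rw [← e1, ← e1, hGram, hGram, hLd]
    have h2 : ‖f i‖ ^ 2 = ‖f j‖ ^ 2 := by exact_mod_cast hsq
    nlinarith [norm_nonneg (f i), norm_nonneg (f j)]
  have hgc : ∀ i j : Fin n, ‖S.symm (f i)‖ = ‖S.symm (f j)‖ := by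
    obtain ⟨p, hp⟩ := hpoly
    have key : ∀ i : Fin n, (inner ℂ (S.symm (f i)) (S.symm (f i)) : ℂ)
        = (Polynomial.aeval L (Polynomial.X * (p * p))) i i := by
      intro i
      rw [hSsa]
      have h1 : S.symm (S.symm (f i)) = (Polynomial.aeval T (p * p)) (f i) := by
        rw [hp, hp, map_mul, Module.End.mul_apply]
      rw [h1, hinner_aeval]
    intro i j
    have e1 : ∀ m : Fin n, (inner ℂ (S.symm (f m)) (S.symm (f m)) : ℂ)
        = ((‖S.symm (f m)‖ : ℂ)) ^ 2 := fun m => inner_self_eq_norm_sq_to_K (S.symm (f m))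
    have hsq : ((‖S.symm (f i)‖ : ℂ)) ^ 2 = ((‖S.symm (f j)‖ : ℂ)) ^ 2 := by
      rw [← e1, ← e1, key i, key j, hdiagL _ i j]
    have h2 : ‖S.symm (f i)‖ ^ 2 = ‖S.symm (f j)‖ ^ 2 := by exact_mod_cast hsq
    nlinarith [norm_nonneg (S.symm (f i)), norm_nonneg (S.symm (f j))]
  set u : Fin n → EuclideanSpace ℂ (Fin k) := fun i => h i - S.symm (f i) with hudef
  have hgdual : ∀ x, ∑ i, (inner ℂ (f i) x : ℂ) • S.symm (f i) = x := by
    intro x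
    have : ∑ i, (inner ℂ (f i) x : ℂ) • S.symm (f i)
        = S.symm (∑ i, (inner ℂ (f i) x : ℂ) • f i) := by
      rw [map_sum]; simp only [map_smul]
    rw [this, ← hS, S.symm_apply_apply]
  have hu0 : ∀ x, ∑ i, (inner ℂ (f i) x : ℂ) • u i = 0 := by
    intro x
    simp only [hudef, smul_sub, Finset.sum_sub_distrib, hdual, hgdual, sub_self]
  have horth : ∑ i, (inner ℂ (S.symm (f i)) (u i) : ℂ) = 0 := by
    have hterm : ∀ (t : Fin k) (i : Fin n),
        (starRingEnd ℂ) (S.symm (f i) t) * (u i t)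
          = (inner ℂ (f i) (S.symm (EuclideanSpace.single t (1:ℂ))) : ℂ)
            * (inner ℂ (EuclideanSpace.single t (1:ℂ)) (u i) : ℂ) := by
      intro t i
      rw [EuclideanSpace.inner_single_left, ← hSsa, EuclideanSpace.inner_single_right]
      simp
    calc ∑ i, (inner ℂ (S.symm (f i)) (u i) : ℂ)
        = ∑ i, ∑ t, (starRingEnd ℂ) (S.symm (f i) t) * (u i t) := by
          simp only [PiLp.inner_apply, RCLike.inner_apply]
          exact Finset.sum_congr rfl fun i _ => Finset.sum_congr rfl fun t _ => mul_comm _ _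
      _ = ∑ t, ∑ i, (starRingEnd ℂ) (S.symm (f i) t) * (u i t) := Finset.sum_comm
      _ = 0 := by
          refine Finset.sum_eq_zero fun t _ => ?_
          simp only [hterm t]
          have : ∑ i, (inner ℂ (f i) (S.symm (EuclideanSpace.single t (1:ℂ))) : ℂ)
              * (inner ℂ (EuclideanSpace.single t (1:ℂ)) (u i) : ℂ)
              = (inner ℂ (EuclideanSpace.single t (1:ℂ))
                  (∑ i, (inner ℂ (f i) (S.symm (EuclideanSpace.single t (1:ℂ))) : ℂ) • u i) : ℂ) := by
            rw [inner_sum]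
            simp only [inner_smul_right]
          rw [this, hu0, inner_zero_right]
  have hsumsq : ∑ i, ‖h i‖ ^ 2
      = ∑ i, ‖S.symm (f i)‖ ^ 2 + ∑ i, ‖u i‖ ^ 2 := by
    have hhi : ∀ i, h i = S.symm (f i) + u i := by
      intro i; simp [hudef]
    have hexp : ∀ i : Fin n, ‖h i‖ ^ 2
        = ‖S.symm (f i)‖ ^ 2 + 2 * RCLike.re (inner ℂ (S.symm (f i)) (u i) : ℂ) + ‖u i‖ ^ 2 := by
      intro i
      rw [hhi i]
      exact norm_add_sq _ _
    rw [Finset.sum_congr rfl fun i _ => hexp i]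
    have hre : ∑ i, 2 * RCLike.re (inner ℂ (S.symm (f i)) (u i) : ℂ) = 0 := by
      rw [← Finset.mul_sum, ← map_sum, horth]
      simp
    rw [Finset.sum_add_distrib, Finset.sum_add_distrib, hre]
    ring
  rcases Nat.eq_zero_or_pos n with hn0 | hn
  · subst hn0
    refine ⟨?_, fun _ i => i.elim0⟩
    simp [iSup_of_empty', Real.sSup_empty]
  · have i₀ : Fin n := ⟨0, hn⟩
    haveI : Nonempty (Fin n) := ⟨i₀⟩
    set c₁ := ‖f i₀‖ with hc₁
    set c₂ := ‖S.symm (f i₀)‖ with hc₂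
    have hterm : ∀ i, ‖f i‖ * ‖S.symm (f i)‖ = c₁ * c₂ := fun i => by
      rw [hfc i i₀, hgc i i₀]
    have hcan : (⨆ i, ‖f i‖ * ‖S.symm (f i)‖) = c₁ * c₂ := by
      rw [iSup_congr hterm]
      exact ciSup_const
    have hgsq : ∑ i, ‖S.symm (f i)‖ ^ 2 = (n : ℝ) * c₂ ^ 2 := by
      rw [Finset.sum_congr rfl fun i _ => by rw [hgc i i₀]]
      simp [Finset.sum_const, Finset.card_univ, mul_comm]
      exact Or.inl rfl
    have hbdd : BddAbove (Set.range fun i => ‖f i‖ * ‖h i‖) :=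
      Set.Finite.bddAbove (Set.finite_range _)
    have hexists : ∃ i : Fin n, c₂ ^ 2 ≤ ‖h i‖ ^ 2 := by
      have hsum_le : ∑ _i : Fin n, c₂ ^ 2 ≤ ∑ i, ‖h i‖ ^ 2 := by
        rw [hsumsq]
        have h1 : ∑ _i : Fin n, c₂ ^ 2 = ∑ i, ‖S.symm (f i)‖ ^ 2 := by
          refine Finset.sum_congr rfl fun i _ => by rw [hgc i i₀]
        rw [h1]
        exact le_add_of_nonneg_right (Finset.sum_nonneg fun i _ => sq_nonneg _)
      obtain ⟨i, -, hi⟩ := Finset.exists_le_of_sum_le ⟨i₀, Finset.mem_univ i₀⟩ hsum_le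
      exact ⟨i, hi⟩
    obtain ⟨iM, hiM⟩ := hexists
    have hc2nn : 0 ≤ c₂ := norm_nonneg _
    have hc2le : c₂ ≤ ‖h iM‖ := by nlinarith [norm_nonneg (h iM)]
    constructor
    · rw [hcan]
      have h1 : c₁ * c₂ ≤ ‖f iM‖ * ‖h iM‖ := by
        rw [hfc iM i₀]
        exact mul_le_mul_of_nonneg_left hc2le (norm_nonneg _)
      exact h1.trans (le_ciSup hbdd iM)
    · intro heq i
      have hle : ∀ j, ‖f j‖ * ‖h j‖ ≤ c₁ * c₂ := by
        intro j
        have := le_ciSup hbdd j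
        rwa [heq, hcan] at this
      by_cases hc1 : c₁ = 0
      · have hf0 : ∀ j, f j = 0 := fun j =>
          norm_eq_zero.mp (by rw [hfc j i₀, ← hc₁, hc1])
        have hx0 : ∀ x : EuclideanSpace ℂ (Fin k), x = 0 := by
          intro x
          rw [← hdual x]
          simp [hf0]
        rw [hx0 (h i), hx0 (S.symm (f i))]
      · have hc1pos : 0 < c₁ := lt_of_le_of_ne (norm_nonneg _) (Ne.symm hc1)
        have hhj : ∀ j, ‖h j‖ ≤ c₂ := by
          intro j
          have := hle j
          rw [hfc j i₀, ← hc₁] at this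
          exact le_of_mul_le_mul_left this hc1pos
        have husum : ∑ j, ‖u j‖ ^ 2 ≤ 0 := by
          have h1 : ∑ j, ‖h j‖ ^ 2 ≤ (n : ℝ) * c₂ ^ 2 := by
            calc ∑ j, ‖h j‖ ^ 2 ≤ ∑ _j : Fin n, c₂ ^ 2 :=
                Finset.sum_le_sum fun j _ => pow_le_pow_left₀ (norm_nonneg (h j)) (hhj j) 2
              _ = (n : ℝ) * c₂ ^ 2 := by
                simp [Finset.sum_const, Finset.card_univ, mul_comm]
          have h2 := hsumsq
          rw [hgsq] at h2
          linarith
        have hnonneg : ∀ j ∈ Finset.univ, (0:ℝ) ≤ ‖u j‖ ^ 2 := fun j _ => sq_nonneg _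
        have hz := (Finset.sum_eq_zero_iff_of_nonneg hnonneg).mp
          (le_antisymm husum (Finset.sum_nonneg hnonneg)) i (Finset.mem_univ i)
        have hui : u i = 0 := by
          have := pow_eq_zero_iff (n := 2) (by norm_num) |>.mp hz
          exact norm_eq_zero.mp this
        have : h i - S.symm (f i) = 0 := hui
        exact sub_eq_zero.mp this
end

section
/- Let G be a connected simple graph on n ≥ 2 vertices with Laplacian matrix L, and let F = {f_i}_{i=1}^n be a frame generated by G for ℂ^{n−1} (vectors spanning ℂ^{n−1} with Gramian matrix equal to L), with frame operator S. Then the canonical dual frame {S^{−1} f_i}_{i=1}^n is the unique optimal dual frame of F for 1-erasure (i.e., for every dual frame {h_i} of F one has max_i ‖f_i‖‖h_i‖ ≥ max_i ‖f_i‖‖S^{−1} f_i‖, with equality only when h_i = S^{−1}f_i for all i) if and only if the quantity ‖S^{−1} f_i‖‖f_i‖ is constant in i, i.e., there exists c such that ‖S^{−1} f_i‖‖f_i‖ = c for all i ∈ {1, ..., n}. -/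
set_option maxHeartbeats 2000000 in
/-- Let `G` be a connected simple graph on `n ≥ 2` vertices and
`F = {f i}_{i=1}^n` a frame for `ℂ^{n-1}` generated by `G`, with frame operator `S`. Then
the canonical dual `{S⁻¹ f i}` is the unique optimal dual frame of `F` for 1-erasure
(every dual frame `{h i}` satisfies `maxᵢ ‖f i‖‖h i‖ ≥ maxᵢ ‖f i‖‖S⁻¹ f i‖`, with equality
only when `h i = S⁻¹ f i` for all `i`) if and only if `‖S⁻¹ f i‖ * ‖f i‖` is constant
in `i`. -/
theorem stmt_15 (n : ℕ) (hn : 2 ≤ n) (G : SimpleGraph (Fin n)) [DecidableRel G.Adj]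
    (hconn : G.Connected)
    (f : Fin n → EuclideanSpace ℂ (Fin (n - 1)))
    (hspan : Submodule.span ℂ (Set.range f) = ⊤)
    (hGram : ∀ i j : Fin n, (inner ℂ (f i) (f j) : ℂ) = G.lapMatrix ℂ i j)
    (S : EuclideanSpace ℂ (Fin (n - 1)) ≃ₗ[ℂ] EuclideanSpace ℂ (Fin (n - 1)))
    (hS : ∀ x, S x = ∑ i, (inner ℂ (f i) x : ℂ) • f i) :
    ((∀ h : Fin n → EuclideanSpace ℂ (Fin (n - 1)),
        (∀ x, ∑ i, (inner ℂ (f i) x : ℂ) • h i = x) →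
        (⨆ i, ‖f i‖ * ‖S.symm (f i)‖) ≤ (⨆ i, ‖f i‖ * ‖h i‖)) ∧
      (∀ h : Fin n → EuclideanSpace ℂ (Fin (n - 1)),
        (∀ x, ∑ i, (inner ℂ (f i) x : ℂ) • h i = x) →
        (⨆ i, ‖f i‖ * ‖h i‖) = (⨆ i, ‖f i‖ * ‖S.symm (f i)‖) →
        ∀ i, h i = S.symm (f i))) ↔
    (∃ c : ℝ, ∀ i : Fin n, ‖S.symm (f i)‖ * ‖f i‖ = c) := by
  classical
  haveI hne : Nonempty (Fin n) := ⟨⟨0, by omega⟩⟩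
  set v : Fin n → EuclideanSpace ℂ (Fin (n - 1)) := fun i => S.symm (f i) with hv
  -- row sums of the Laplacian vanish
  have hrowsum : ∀ j : Fin n, ∑ i, G.lapMatrix ℂ j i = 0 := by
    intro j
    have := congrFun (G.lapMatrix_mulVec_const_eq_zero (R := ℂ)) j
    simpa [Matrix.mulVec, dotProduct] using this
  -- the frame vectors sum to zero
  have hsum : ∑ i, f i = 0 := by
    have hperp : ∀ j, (inner ℂ (f j) (∑ i, f i) : ℂ) = 0 := by
      intro j
      rw [inner_sum]
      simp only [hGram]
      exact hrowsum j
    have hmem : (∑ i, f i) ∈ Submodule.span ℂ (Set.range f) := by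
      rw [hspan]; trivial
    obtain ⟨c, hc⟩ := (Submodule.mem_span_range_iff_exists_fun ℂ).mp hmem
    have h0 : (inner ℂ (∑ i, c i • f i) (∑ i, f i) : ℂ) = 0 := by
      rw [sum_inner]
      refine Finset.sum_eq_zero fun j _ => ?_
      rw [inner_smul_left, hperp j, mul_zero]
    rw [hc] at h0
    exact inner_self_eq_zero.mp h0
  have hvsum : ∑ i, v i = 0 := by
    rw [hv]
    rw [← map_sum S.symm f Finset.univ, hsum, map_zero]
  -- S is self-adjoint
  have hSA : ∀ x y, (inner ℂ (S x) y : ℂ) = inner ℂ x (S y) := by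
    intro x y
    rw [hS x, hS y, sum_inner, inner_sum]
    congr 1
    ext i
    rw [inner_smul_left, inner_smul_right, ← inner_conj_symm x (f i)]
    ring
  -- canonical dual property
  have hcan : ∀ x, ∑ i, (inner ℂ (f i) x : ℂ) • v i = x := by
    intro x
    apply S.injective
    rw [map_sum, hS x]
    congr 1
    ext i
    rw [map_smul]
    simp [hv]
  -- kernel of the synthesis operator is spanned by the all-ones vector
  have hker : Submodule.span ℂ {(fun _ => 1 : Fin n → ℂ)}
      = LinearMap.ker (Fintype.linearCombination ℂ f) := by
    apply Submodule.eq_of_le_of_finrank_eq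
    · rw [Submodule.span_le, Set.singleton_subset_iff]
      simp only [SetLike.mem_coe, LinearMap.mem_ker, Fintype.linearCombination_apply, one_smul]
      exact hsum
    · have hone : (fun _ => 1 : Fin n → ℂ) ≠ 0 := by
        intro h
        have := congrFun h ⟨0, by omega⟩
        simp at this
      rw [finrank_span_singleton hone]
      have hrange : LinearMap.range (Fintype.linearCombination ℂ f) = ⊤ := by
        rw [Fintype.range_linearCombination, hspan]
      have h1 := LinearMap.finrank_range_add_finrank_ker (Fintype.linearCombination ℂ f)
      rw [hrange, finrank_top, finrank_euclideanSpace_fin] at h1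
      have h2 : Module.finrank ℂ (Fin n → ℂ) = n := by
        rw [Module.finrank_fintype_fun_eq_card, Fintype.card_fin]
      rw [h2] at h1
      omega
  -- key Gram identity for the canonical dual
  have i0 : Fin n := ⟨0, by omega⟩
  have hq : ∀ i : Fin n, ∃ γ : ℂ, ∀ j, (inner ℂ (f j) (v i) : ℂ) = (if j = i then 1 else 0) + γ := by
    intro i
    have hmem : (fun j => (inner ℂ (f j) (v i) : ℂ) - (if j = i then 1 else 0))
        ∈ LinearMap.ker (Fintype.linearCombination ℂ f) := by
      rw [LinearMap.mem_ker, Fintype.linearCombination_apply]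
      have hsplit : ∑ j, ((inner ℂ (f j) (v i) : ℂ) - (if j = i then 1 else 0)) • f j
          = (∑ j, (inner ℂ (f j) (v i) : ℂ) • f j)
            - ∑ j, (if j = i then (1:ℂ) else 0) • f j := by
        rw [← Finset.sum_sub_distrib]
        exact Finset.sum_congr rfl fun j _ => by rw [sub_smul]
      rw [hsplit]
      have h1 : ∑ j, (inner ℂ (f j) (v i) : ℂ) • f j = f i := by
        rw [← hS (v i)]
        simp [hv]
      have h2 : ∑ j, (if j = i then (1:ℂ) else 0) • f j = f i := by
        simp [ite_smul]
      rw [h1, h2, sub_self]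
    rw [← hker, Submodule.mem_span_singleton] at hmem
    obtain ⟨a, ha⟩ := hmem
    refine ⟨a, fun j => ?_⟩
    have h3 := congrFun ha j
    simp only [Pi.smul_apply, smul_eq_mul, mul_one] at h3
    exact sub_eq_iff_eq_add'.mp h3.symm
  choose γ hγ using hq
  have hsymm : ∀ i j : Fin n, (inner ℂ (f j) (v i) : ℂ) = starRingEnd ℂ (inner ℂ (f i) (v j)) := by
    intro i j
    calc (inner ℂ (f j) (v i) : ℂ) = inner ℂ (S (v j)) (v i) := by rw [hv]; simp
      _ = inner ℂ (v j) (S (v i)) := hSA _ _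
      _ = inner ℂ (v j) (f i) := by rw [hv]; simp
      _ = starRingEnd ℂ (inner ℂ (f i) (v j)) := (inner_conj_symm _ _).symm
  have hγconj : ∀ i j : Fin n, γ i = starRingEnd ℂ (γ j) := by
    intro i j
    have h1 := hsymm i j
    rw [hγ i j, hγ j i, map_add] at h1
    have h2 : (starRingEnd ℂ) (if i = j then (1:ℂ) else 0) = (if j = i then (1:ℂ) else 0) := by
      by_cases h : i = j
      · simp [h]
      · simp [h, Ne.symm h]
    rw [h2] at h1
    exact add_left_cancel h1
  have hγconst : ∀ i j : Fin n, γ i = γ j := fun i j => by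
    rw [hγconj i j, ← hγconj j j]
  have hγval : ∀ i : Fin n, γ i = -1/n := by
    intro i
    have h0 : (inner ℂ (f i) (∑ k, v k) : ℂ) = 0 := by rw [hvsum, inner_zero_right]
    rw [inner_sum] at h0
    have h1 : ∑ k, ((if i = k then (1:ℂ) else 0) + γ i) = 0 := by
      calc ∑ k, ((if i = k then (1:ℂ) else 0) + γ i)
          = ∑ k, (inner ℂ (f i) (v k) : ℂ) :=
            Finset.sum_congr rfl fun k _ => ((hγ k i).trans (by rw [hγconst k i])).symm
        _ = 0 := h0
    rw [Finset.sum_add_distrib, Finset.sum_ite_eq, if_pos (Finset.mem_univ i),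
      Finset.sum_const, Finset.card_univ, Fintype.card_fin] at h1
    have hnne : (n : ℂ) ≠ 0 := by
      exact Nat.cast_ne_zero.mpr (by omega : n ≠ 0)
    field_simp at h1 ⊢
    linear_combination h1
  have hA : ∀ i j : Fin n, (inner ℂ (f j) (v i) : ℂ) = (if j = i then 1 else 0) - 1/n := by
    intro i j
    rw [hγ i j, hγval i, sub_eq_add_neg, neg_div]
  have hA' : ∀ i j : Fin n, (inner ℂ (v i) (f j) : ℂ) = (if j = i then 1 else 0) - 1/n := by
    intro i j
    rw [← inner_conj_symm, hA i j, map_sub, map_div₀, map_one, map_natCast]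
    congr 1
    by_cases h : j = i <;> simp [h]
  -- positivity of lower bound
  have hnR : (2:ℝ) ≤ n := by exact_mod_cast hn
  have hlow : 0 < 1 - 1/(n:ℝ) := by
    have h1 : 1/(n:ℝ) ≤ 1/2 := by
      apply one_div_le_one_div_of_le <;> linarith
    linarith
  have hCS : ∀ i : Fin n, 1 - 1/(n:ℝ) ≤ ‖f i‖ * ‖v i‖ := by
    intro i
    have h1 := norm_inner_le_norm (𝕜 := ℂ) (f i) (v i)
    have h2 : (inner ℂ (f i) (v i) : ℂ) = ((1 - 1/(n:ℝ) : ℝ) : ℂ) := by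
      rw [hA i i, if_pos rfl]
      push_cast
      ring
    rw [h2] at h1
    rw [Complex.norm_real, Real.norm_eq_abs, abs_of_nonneg (le_of_lt hlow)] at h1
    exact h1
  have hfpos : ∀ i : Fin n, 0 < ‖f i‖ := by
    intro i
    have h1 := hCS i
    by_contra hcon
    push_neg at hcon
    have : ‖f i‖ = 0 := le_antisymm hcon (norm_nonneg _)
    rw [this, zero_mul] at h1
    linarith
  have hvpos : ∀ i : Fin n, 0 < ‖v i‖ := by
    intro i
    have h1 := hCS i
    by_contra hcon
    push_neg at hcon
    have : ‖v i‖ = 0 := le_antisymm hcon (norm_nonneg _)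
    rw [this, mul_zero] at h1
    linarith
  -- difference of dual frames is constant
  have hdiff : ∀ h : Fin n → EuclideanSpace ℂ (Fin (n - 1)),
      (∀ x, ∑ i, (inner ℂ (f i) x : ℂ) • h i = x) → ∀ i j, h i - v i = h j - v j := by
    intro h hd i j
    have h0 : ∀ x, ∑ k, (inner ℂ (f k) x : ℂ) • (h k - v k) = 0 := by
      intro x
      have hsplit : ∑ k, (inner ℂ (f k) x : ℂ) • (h k - v k)
          = (∑ k, (inner ℂ (f k) x : ℂ) • h k) - ∑ k, (inner ℂ (f k) x : ℂ) • v k := by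
        rw [← Finset.sum_sub_distrib]
        exact Finset.sum_congr rfl fun k _ => smul_sub _ _ _
      rw [hsplit, hd x, hcan x, sub_self]
    have h1 := h0 (v i - v j)
    have h2 : ∀ k ∈ Finset.univ, (inner ℂ (f k) (v i - v j) : ℂ) • (h k - v k)
        = ((if k = i then (1:ℂ) else 0) - (if k = j then 1 else 0)) • (h k - v k) := by
      intro k _
      congr 1
      rw [inner_sub_right, hA i k, hA j k]
      ring
    rw [Finset.sum_congr rfl h2] at h1
    have h3 : ∑ k, ((if k = i then (1:ℂ) else 0) - (if k = j then 1 else 0)) • (h k - v k)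
        = (h i - v i) - (h j - v j) := by
      have : ∀ k ∈ Finset.univ, ((if k = i then (1:ℂ) else 0) - (if k = j then 1 else 0)) • (h k - v k)
          = (if k = i then (1:ℂ) else 0) • (h k - v k) - (if k = j then (1:ℂ) else 0) • (h k - v k) :=
        fun k _ => sub_smul _ _ _
      rw [Finset.sum_congr rfl this, Finset.sum_sub_distrib]
      congr 1
      · simp [ite_smul]
      · simp [ite_smul]
    rw [h3] at h1
    exact sub_eq_zero.mp h1
  -- sup over a finite index is a max
  have hsup : ∀ g : Fin n → ℝ, ∃ i, (⨆ k, g k) = g i ∧ ∀ k, g k ≤ g i := by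
    intro g
    obtain ⟨i, hi⟩ := Finite.exists_max g
    exact ⟨i, le_antisymm (ciSup_le hi) (le_ciSup (Set.finite_range g).bddAbove i), hi⟩
  constructor
  · rintro ⟨hopt, -⟩
    by_contra hnc
    push_neg at hnc
    obtain ⟨im, hMeq, hMmax⟩ := hsup (fun i => ‖f i‖ * ‖v i‖)
    set M := ‖f im‖ * ‖v im‖ with hM
    obtain ⟨j0, hj0⟩ := hnc M
    have hj0lt : ‖f j0‖ * ‖v j0‖ < M :=
      lt_of_le_of_ne (hMmax j0) (fun hEq => hj0 (by rw [mul_comm] at hEq; exact hEq))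
    set I : Finset (Fin n) := Finset.univ.filter (fun i => ‖f i‖ * ‖v i‖ = M) with hI
    have himI : im ∈ I := by simp [hI, hM]
    have hj0I : j0 ∉ I := by
      simp only [hI, Finset.mem_filter, Finset.mem_univ, true_and]
      exact ne_of_lt hj0lt
    have hIcard : (I.card : ℝ) < n := by
      have hcard : I.card < n := by
        have h1 : I ⊆ Finset.univ.erase j0 :=
          fun k hk => Finset.mem_erase.mpr ⟨fun he => hj0I (he ▸ hk), Finset.mem_univ k⟩
        have h2 := Finset.card_le_card h1
        rw [Finset.card_erase_of_mem (Finset.mem_univ j0), Finset.card_univ,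
          Fintype.card_fin] at h2
        omega
      exact_mod_cast hcard
    set u : EuclideanSpace ℂ (Fin (n - 1)) := ∑ i ∈ I, f i with hu
    set t : ℝ := 1 - I.card / n with ht
    have htpos : 0 < t := by
      rw [ht, sub_pos, div_lt_one (by linarith : (0:ℝ) < n)]
      exact hIcard
    have hvu : ∀ j, (inner ℂ (v j) u : ℂ) = (if j ∈ I then 1 else 0) - (I.card : ℂ) / n := by
      intro j
      rw [hu, inner_sum]
      have hterm : ∀ i ∈ I, (inner ℂ (v j) (f i) : ℂ) = (if i = j then 1 else 0) - 1/n :=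
        fun i _ => hA' j i
      rw [Finset.sum_congr rfl hterm, Finset.sum_sub_distrib]
      congr 1
      · exact Finset.sum_ite_eq' I j (fun _ => (1:ℂ))
      · rw [Finset.sum_const, nsmul_eq_mul]
        ring
    have hvut : ∀ j ∈ I, (inner ℂ (v j) u : ℂ) = (t : ℝ) := by
      intro j hj
      rw [hvu j, if_pos hj, ht]
      push_cast
      ring
    have hune : u ≠ 0 := by
      intro h0
      have h1 := hvut im himI
      rw [h0, inner_zero_right] at h1
      have h2 : t = 0 := by exact_mod_cast h1.symm
      linarith
    have hupos : 0 < ‖u‖ := norm_pos_iff.mpr hune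
    set b : Fin n → ℝ :=
      fun j => if j ∈ I then 2*t/‖u‖^2 else (M - ‖f j‖*‖v j‖)/(‖f j‖*‖u‖) with hb
    have hbpos : ∀ j, 0 < b j := by
      intro j
      simp only [hb]
      by_cases hj : j ∈ I
      · rw [if_pos hj]
        positivity
      · rw [if_neg hj]
        have hjne : ‖f j‖ * ‖v j‖ ≠ M := by
          simpa only [hI, Finset.mem_filter, Finset.mem_univ, true_and] using hj
        have hjlt : ‖f j‖ * ‖v j‖ < M := lt_of_le_of_ne (hMmax j) hjne
        apply div_pos (by linarith)
        exact mul_pos (hfpos j) hupos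
    set ε : ℝ := (Finset.univ.inf' Finset.univ_nonempty b) / 2 with hε
    have hinfpos : 0 < Finset.univ.inf' Finset.univ_nonempty b :=
      (Finset.lt_inf'_iff _).mpr fun j _ => hbpos j
    have hεpos : 0 < ε := by rw [hε]; linarith
    have hεlt : ∀ j, ε < b j := by
      intro j
      have h1 : Finset.univ.inf' Finset.univ_nonempty b ≤ b j :=
        Finset.inf'_le b (Finset.mem_univ j)
      rw [hε]
      linarith
    set h : Fin n → EuclideanSpace ℂ (Fin (n - 1)) := fun i => v i - (ε:ℂ) • u with hh
    have hdual : ∀ x, ∑ i, (inner ℂ (f i) x : ℂ) • h i = x := by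
      intro x
      have hsplit : ∑ i, (inner ℂ (f i) x : ℂ) • h i
          = (∑ i, (inner ℂ (f i) x : ℂ) • v i) - (∑ i, (inner ℂ (f i) x : ℂ)) • ((ε:ℂ) • u) := by
        rw [Finset.sum_smul, ← Finset.sum_sub_distrib]
        exact Finset.sum_congr rfl fun i _ => by rw [hh, smul_sub]
      rw [hsplit, hcan x]
      have hz : ∑ i, (inner ℂ (f i) x : ℂ) = 0 := by
        rw [← sum_inner, hsum, inner_zero_left]
      rw [hz, zero_smul, sub_zero]
    have hεu : ‖(ε:ℂ) • u‖ = ε * ‖u‖ := by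
      rw [norm_smul, Complex.norm_real, Real.norm_eq_abs, abs_of_pos hεpos]
    have hlt : ∀ j, ‖f j‖ * ‖h j‖ < M := by
      intro j
      by_cases hj : j ∈ I
      · have hsq : ‖h j‖^2 = ‖v j‖^2 - 2*(ε*t) + (ε*‖u‖)^2 := by
          have h9 := norm_sub_sq (𝕜 := ℂ) (v j) ((ε:ℂ) • u)
          rw [inner_smul_right, hvut j hj] at h9
          simp only [RCLike.re_to_complex, Complex.mul_re, Complex.ofReal_re,
            Complex.ofReal_im, mul_zero, zero_mul, sub_zero] at h9
          simp only [hh]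
          rw [h9, hεu]
        have hbj := hεlt j
        simp only [hb] at hbj
        rw [if_pos hj] at hbj
        have hbj2 : ε * ‖u‖^2 < 2*t := by
          rw [lt_div_iff₀ (by positivity : (0:ℝ) < ‖u‖^2)] at hbj
          exact hbj
        have hsq2 : ‖h j‖^2 < ‖v j‖^2 := by nlinarith
        have hnlt : ‖h j‖ < ‖v j‖ := by
          nlinarith [norm_nonneg (h j), norm_nonneg (v j)]
        have hjM : ‖f j‖ * ‖v j‖ = M := by
          simpa only [hI, Finset.mem_filter, Finset.mem_univ, true_and] using hj
        calc ‖f j‖ * ‖h j‖ < ‖f j‖ * ‖v j‖ := by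
              exact mul_lt_mul_of_pos_left hnlt (hfpos j)
          _ = M := hjM
      · have hjne : ‖f j‖ * ‖v j‖ ≠ M := by
          simpa only [hI, Finset.mem_filter, Finset.mem_univ, true_and] using hj
        have hjlt : ‖f j‖ * ‖v j‖ < M := lt_of_le_of_ne (hMmax j) hjne
        have h1 : ‖h j‖ ≤ ‖v j‖ + ε*‖u‖ := by
          rw [hh]
          refine (norm_sub_le _ _).trans ?_
          rw [hεu]
        have h2 : ε * (‖f j‖ * ‖u‖) < M - ‖f j‖*‖v j‖ := by
          have h3 := hεlt j
          simp only [hb] at h3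
          rw [if_neg hj, lt_div_iff₀ (mul_pos (hfpos j) hupos)] at h3
          linarith
        calc ‖f j‖ * ‖h j‖ ≤ ‖f j‖ * (‖v j‖ + ε*‖u‖) :=
              mul_le_mul_of_nonneg_left h1 (norm_nonneg _)
          _ < M := by nlinarith
    have hle := hopt h hdual
    obtain ⟨k, hk, -⟩ := hsup (fun j => ‖f j‖ * ‖h j‖)
    rw [hMeq, hk] at hle
    linarith [hlt k]
  · rintro ⟨c, hc⟩
    have hceq : (⨆ i, ‖f i‖ * ‖v i‖) = c := by
      have hfun : (fun i => ‖f i‖ * ‖v i‖) = fun _ => c :=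
        funext fun i => by rw [mul_comm]; exact hc i
      rw [hfun]
      exact ciSup_const
    have key : ∀ h : Fin n → EuclideanSpace ℂ (Fin (n - 1)),
        (∀ x, ∑ i, (inner ℂ (f i) x : ℂ) • h i = x) →
        (∀ i, h i = v i) ∨ c < (⨆ i, ‖f i‖ * ‖h i‖) := by
      intro h hd
      by_cases hu0 : h i0 - v i0 = 0
      · left
        intro i
        have h1 := hdiff h hd i i0
        rw [hu0] at h1
        exact sub_eq_zero.mp h1
      · right
        set u := h i0 - v i0 with huu
        have hhi : ∀ i, h i = v i + u := by
          intro i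
          have h1 := hdiff h hd i i0
          rw [← huu] at h1
          rw [← h1]
          abel
        have hre : ∃ i, 0 ≤ (inner ℂ (v i) u : ℂ).re := by
          by_contra hcon
          push_neg at hcon
          have hzero : ∑ i, (inner ℂ (v i) u : ℂ) = 0 := by
            rw [← sum_inner, hvsum, inner_zero_left]
          have hzre : ∑ i, (inner ℂ (v i) u : ℂ).re = 0 := by
            rw [← Complex.re_sum, hzero, Complex.zero_re]
          have hneg : ∑ i, (inner ℂ (v i) u : ℂ).re < 0 :=
            Finset.sum_neg (fun i _ => hcon i) Finset.univ_nonempty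
          linarith
        obtain ⟨i, hi⟩ := hre
        have hupos : 0 < ‖u‖ := norm_pos_iff.mpr hu0
        have hnorm : ‖v i‖ < ‖h i‖ := by
          have hsq : ‖h i‖^2 = ‖v i‖^2 + 2*(inner ℂ (v i) u : ℂ).re + ‖u‖^2 := by
            rw [hhi i]
            have := norm_add_sq (𝕜 := ℂ) (v i) u
            simpa using this
          nlinarith [norm_nonneg (h i), norm_nonneg (v i)]
        have hclt : c < ‖f i‖ * ‖h i‖ := by
          have h1 := mul_lt_mul_of_pos_left hnorm (hfpos i)
          have h2 : c = ‖f i‖ * ‖v i‖ := by rw [← hc i, mul_comm]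
          linarith
        exact lt_of_lt_of_le hclt (le_ciSup (Set.finite_range (fun j => ‖f j‖ * ‖h j‖)).bddAbove i)
    constructor
    · intro h hd
      rcases key h hd with h1 | h1
      · have hfun : (fun i => ‖f i‖ * ‖h i‖) = fun i => ‖f i‖ * ‖v i‖ :=
          funext fun i => by rw [h1 i]
        rw [hfun]
      · rw [hceq]
        exact le_of_lt h1
    · intro h hd heq i
      rcases key h hd with h1 | h1
      · exact h1 i
      · rw [heq, hceq] at h1
        exact absurd h1 (lt_irrefl c)
end

section
/- Let G be a connected simple graph on n ≥ 2 vertices with Laplacian matrix L, and let F = {f_i}_{i=1}^n be a frame generated by G for ℂ^{n−1} (vectors spanning ℂ^{n−1} with Gramian matrix equal to L), with frame operator S. If the canonical dual frame {S^{−1} f_i}_{i=1}^n is an optimal dual frame of F for 1-erasure (i.e., max_i ‖f_i‖‖h_i‖ ≥ max_i ‖f_i‖‖S^{−1} f_i‖ for every dual frame {h_i} of F), then it is the unique optimal dual frame for 1-erasure: every dual frame {h_i} of F with max_i ‖f_i‖‖h_i‖ = max_i ‖f_i‖‖S^{−1} f_i‖ satisfies h_i = S^{−1} f_i for all i. -/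
set_option maxHeartbeats 1000000 in
/-- Let `G` be a connected simple graph on `n ≥ 2` vertices and
`F = {f i}_{i=1}^n` a frame for `ℂ^{n-1}` generated by `G`, with frame operator `S`. If the
canonical dual `{S⁻¹ f i}` is an optimal dual frame of `F` for 1-erasure, then it is the
unique one: every dual frame `{h i}` with `maxᵢ ‖f i‖‖h i‖ = maxᵢ ‖f i‖‖S⁻¹ f i‖`
satisfies `h i = S⁻¹ f i` for all `i`. -/
theorem stmt_16 (n : ℕ) (hn : 2 ≤ n) (G : SimpleGraph (Fin n)) [DecidableRel G.Adj]
    (hconn : G.Connected)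
    (f : Fin n → EuclideanSpace ℂ (Fin (n - 1)))
    (hspan : Submodule.span ℂ (Set.range f) = ⊤)
    (hGram : ∀ i j : Fin n, (inner ℂ (f i) (f j) : ℂ) = G.lapMatrix ℂ i j)
    (S : EuclideanSpace ℂ (Fin (n - 1)) ≃ₗ[ℂ] EuclideanSpace ℂ (Fin (n - 1)))
    (hS : ∀ x, S x = ∑ i, (inner ℂ (f i) x : ℂ) • f i)
    (hopt : ∀ h : Fin n → EuclideanSpace ℂ (Fin (n - 1)),
      (∀ x, ∑ i, (inner ℂ (f i) x : ℂ) • h i = x) →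
      (⨆ i, ‖f i‖ * ‖S.symm (f i)‖) ≤ (⨆ i, ‖f i‖ * ‖h i‖)) :
    ∀ h : Fin n → EuclideanSpace ℂ (Fin (n - 1)),
      (∀ x, ∑ i, (inner ℂ (f i) x : ℂ) • h i = x) →
      (⨆ i, ‖f i‖ * ‖h i‖) = (⨆ i, ‖f i‖ * ‖S.symm (f i)‖) →
      ∀ i, h i = S.symm (f i) := by
  classical
  haveI : Nonempty (Fin n) := ⟨⟨0, by omega⟩⟩
  intro h hdual heq i
  -- Step 1: a vector orthogonal to all `f j` is zero.
  have hkill : ∀ v : EuclideanSpace ℂ (Fin (n - 1)),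
      (∀ j, (inner ℂ (f j) v : ℂ) = 0) → v = 0 := by
    intro v hv
    have hle : Submodule.span ℂ (Set.range f) ≤ (ℂ ∙ v)ᗮ := by
      rw [Submodule.span_le]
      rintro _ ⟨j, rfl⟩
      exact Submodule.mem_orthogonal_singleton_iff_inner_left.mpr (hv j)
    rw [hspan] at hle
    have hvmem : v ∈ (ℂ ∙ v)ᗮ := hle trivial
    have := (Submodule.mem_orthogonal _ _).mp hvmem v (Submodule.mem_span_singleton_self v)
    exact inner_self_eq_zero.mp this
  -- Step 2: rows of the Laplacian sum to zero, hence `∑ f i = 0`.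
  have hrow : ∀ j : Fin n, ∑ k, G.lapMatrix ℂ j k = 0 := by
    intro j
    have := congrFun (G.lapMatrix_mulVec_const_eq_zero (R := ℂ)) j
    simpa [Matrix.mulVec, dotProduct] using this
  have hsum : (∑ k, f k) = 0 := by
    apply hkill
    intro j
    rw [inner_sum]
    simp only [hGram]
    exact hrow j
  -- Step 3: all `f i` are nonzero.
  have hfpos : ∀ i : Fin n, 0 < ‖f i‖ := by
    intro i
    rw [norm_pos_iff]
    intro hzero
    obtain ⟨j, hj⟩ := Fintype.exists_ne_of_one_lt_card (by simp; omega) i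
    obtain ⟨p⟩ := hconn.preconnected i j
    have hdeg : 0 < G.degree i := by
      rw [SimpleGraph.degree_pos_iff_exists_adj]
      cases p with
      | nil => exact absurd rfl hj.symm
      | cons hadj _ => exact ⟨_, hadj⟩
    have h1 : (G.lapMatrix ℂ i i) = 0 := by rw [← hGram]; simp [hzero]
    have h2 : (G.degree i : ℂ) = 0 := by
      simpa [SimpleGraph.lapMatrix, SimpleGraph.degMatrix, Matrix.sub_apply] using h1
    rw [Nat.cast_eq_zero] at h2
    omega
  -- Step 4: the canonical dual is a dual frame.
  have hgdual : ∀ x, ∑ k, (inner ℂ (f k) x : ℂ) • S.symm (f k) = x := by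
    intro x
    have : ∑ k, (inner ℂ (f k) x : ℂ) • S.symm (f k)
        = S.symm (∑ k, (inner ℂ (f k) x : ℂ) • f k) := by
      rw [map_sum]
      simp [map_smul]
    rw [this, ← hS, S.symm_apply_apply]
  -- Step 5: the analysis-type operator `A`.
  let A : EuclideanSpace ℂ (Fin (n - 1)) →ₗ[ℂ] EuclideanSpace ℂ (Fin n) :=
    { toFun := fun x => WithLp.toLp 2 (fun k => (inner ℂ (f k) x : ℂ))
      map_add' := by
        intro x y
        ext k
        simp [inner_add_right]
      map_smul' := by
        intro c x
        ext k
        simp [inner_smul_right] }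
  have hAinj : Function.Injective A := by
    rw [← LinearMap.ker_eq_bot, Submodule.eq_bot_iff]
    intro x hx
    exact hkill x fun j => congrArg (fun v : EuclideanSpace ℂ (Fin n) => v j) (LinearMap.mem_ker.mp hx)
  let one : EuclideanSpace ℂ (Fin n) := WithLp.toLp 2 (fun _ => (1 : ℂ))
  have hone : one ≠ 0 := by
    intro hc
    have := congrArg (fun v : EuclideanSpace ℂ (Fin n) => v ⟨0, by omega⟩) hc
    simp [one] at this
  have hAle : LinearMap.range A ≤ (ℂ ∙ one)ᗮ := by
    rintro _ ⟨x, rfl⟩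
    rw [Submodule.mem_orthogonal_singleton_iff_inner_right]
    have : (inner ℂ one (A x) : ℂ) = ∑ k, (inner ℂ (f k) x : ℂ) := by
      simp [PiLp.inner_apply, RCLike.inner_apply, one, A]
    rw [this, ← sum_inner, hsum, inner_zero_left]
  have hrange : LinearMap.range A = (ℂ ∙ one)ᗮ := by
    apply Submodule.eq_of_le_of_finrank_le hAle
    have h1 : Module.finrank ℂ (LinearMap.range A) = n - 1 := by
      rw [LinearMap.finrank_range_of_inj hAinj, finrank_euclideanSpace_fin]
    have h2 : Module.finrank ℂ ((ℂ ∙ one)ᗮ : Submodule ℂ (EuclideanSpace ℂ (Fin n))) = n - 1 := by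
      have h3 := Submodule.finrank_add_finrank_orthogonal (K := (ℂ ∙ one))
      rw [finrank_span_singleton hone, finrank_euclideanSpace_fin] at h3
      omega
    omega
  -- Step 6: any "null dual perturbation" is constant.
  have hconst : ∀ u : Fin n → EuclideanSpace ℂ (Fin (n - 1)),
      (∀ x, ∑ k, (inner ℂ (f k) x : ℂ) • u k = 0) → ∀ a b : Fin n, u a = u b := by
    intro u hu a b
    set t : EuclideanSpace ℂ (Fin n) :=
      WithLp.toLp 2 (fun k => (if k = a then 1 else 0) - (if k = b then 1 else 0) : Fin n → ℂ) with ht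
    have hmem : t ∈ (ℂ ∙ one)ᗮ := by
      rw [Submodule.mem_orthogonal_singleton_iff_inner_right]
      have : (inner ℂ one t : ℂ)
          = ∑ k, ((if k = a then 1 else 0) - (if k = b then 1 else 0) : ℂ) := by
        simp [PiLp.inner_apply, RCLike.inner_apply, one, ht]
      rw [this]
      simp [Finset.sum_sub_distrib]
    rw [← hrange] at hmem
    obtain ⟨x, hx⟩ := hmem
    have h0 := hu x
    have hcoef : ∀ k, (inner ℂ (f k) x : ℂ)
        = ((if k = a then 1 else 0) - (if k = b then 1 else 0) : ℂ) := by
      intro k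
      exact congrArg (fun v : EuclideanSpace ℂ (Fin n) => v k) hx
    rw [Finset.sum_congr rfl (fun k _ => by rw [hcoef k])] at h0
    have : u a - u b = 0 := by
      rw [← h0]
      simp [sub_smul, Finset.sum_sub_distrib, ite_smul, Finset.sum_ite_eq']
    exact sub_eq_zero.mp this
  -- Step 7: `h` differs from the canonical dual by a constant vector `w`.
  have hu : ∀ x, ∑ k, (inner ℂ (f k) x : ℂ) • (h k - S.symm (f k)) = 0 := by
    intro x
    simp only [smul_sub, Finset.sum_sub_distrib, hdual x, hgdual x, sub_self]
  set w : EuclideanSpace ℂ (Fin (n - 1)) := h i - S.symm (f i) with hw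
  have hwk : ∀ k, h k = S.symm (f k) + w := by
    intro k
    have := hconst (fun k => h k - S.symm (f k)) hu k i
    beta_reduce at this
    rw [← hw] at this
    rw [← this]
    abel
  -- Step 8: midpoint dual and the parallelogram law force `w = 0`.
  set c0 : ℝ := ⨆ j, ‖f j‖ * ‖S.symm (f j)‖ with hc0def
  have hmid : ∀ x, ∑ k, (inner ℂ (f k) x : ℂ) • (S.symm (f k) + (2⁻¹ : ℂ) • w) = x := by
    intro x
    have h1 : ∑ k, (inner ℂ (f k) x : ℂ) • ((2⁻¹ : ℂ) • w)
        = ((inner ℂ (∑ k, f k) x : ℂ)) • ((2⁻¹ : ℂ) • w) := by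
      rw [sum_inner, Finset.sum_smul]
    simp only [smul_add, Finset.sum_add_distrib, hgdual x, h1, hsum, inner_zero_left, zero_smul,
      add_zero]
  have hle2 := hopt _ hmid
  obtain ⟨i0, -, hi0⟩ := Set.exists_max_image Set.univ
    (fun k => ‖f k‖ * ‖S.symm (f k) + (2⁻¹ : ℂ) • w‖) Set.finite_univ ⟨i, trivial⟩
  have hA2 : c0 ≤ ‖f i0‖ * ‖S.symm (f i0) + (2⁻¹ : ℂ) • w‖ :=
    le_trans hle2 (ciSup_le fun k => hi0 k trivial)
  have hbddh : BddAbove (Set.range fun k => ‖f k‖ * ‖h k‖) :=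
    (Set.finite_range _).bddAbove
  have hbddg : BddAbove (Set.range fun k => ‖f k‖ * ‖S.symm (f k)‖) :=
    (Set.finite_range _).bddAbove
  have hB2 : ‖f i0‖ * ‖S.symm (f i0)‖ ≤ c0 := le_ciSup hbddg i0
  have hC2 : ‖f i0‖ * ‖S.symm (f i0) + w‖ ≤ c0 := by
    have := le_ciSup hbddh i0
    rw [heq] at this
    rwa [hwk i0] at this
  have hpar := parallelogram_law_with_norm ℂ (S.symm (f i0) + (2⁻¹ : ℂ) • w) ((2⁻¹ : ℂ) • w)
  have hab : S.symm (f i0) + (2⁻¹ : ℂ) • w + (2⁻¹ : ℂ) • w = S.symm (f i0) + w := by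
    rw [add_assoc, ← add_smul]
    norm_num
  have hab' : S.symm (f i0) + (2⁻¹ : ℂ) • w - (2⁻¹ : ℂ) • w = S.symm (f i0) := by
    abel
  rw [hab, hab'] at hpar
  have hwhalf : ‖(2⁻¹ : ℂ) • w‖ = 2⁻¹ * ‖w‖ := by
    rw [norm_smul]
    norm_num
  rw [hwhalf] at hpar
  have hp : 0 < ‖f i0‖ := hfpos i0
  have hc0 : 0 ≤ c0 := le_trans (mul_nonneg hp.le (norm_nonneg _)) hB2
  have e1 : c0 * c0 ≤ (‖f i0‖ * ‖S.symm (f i0) + (2⁻¹ : ℂ) • w‖)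
      * (‖f i0‖ * ‖S.symm (f i0) + (2⁻¹ : ℂ) • w‖) := mul_self_le_mul_self hc0 hA2
  have e2 : (‖f i0‖ * ‖S.symm (f i0) + w‖) * (‖f i0‖ * ‖S.symm (f i0) + w‖) ≤ c0 * c0 :=
    mul_self_le_mul_self (mul_nonneg hp.le (norm_nonneg _)) hC2
  have e3 : (‖f i0‖ * ‖S.symm (f i0)‖) * (‖f i0‖ * ‖S.symm (f i0)‖) ≤ c0 * c0 :=
    mul_self_le_mul_self (mul_nonneg hp.le (norm_nonneg _)) hB2
  have hwle : ‖w‖ * ‖w‖ ≤ 0 := by nlinarith [mul_pos hp hp]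
  have hw0 : w = 0 := by
    rw [← norm_eq_zero]
    nlinarith [norm_nonneg w]
  have := hwk i
  rw [hw0, add_zero] at this
  exact this
end
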